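/- arXiv:1007.5269 — 5 statements merged into one kernel-verified Lean document; each statement's English description precedes it below -/
import Mathlib

section
/- Let X and Y be independent ℤ₊-valued random variables and let i, d ∈ ℕ, and set q := min{P[X=0]·P[Y=i+d], P[X=i]·P[Y=0]}. Then there exists a probability space carrying random pairs (X',Y') and (X'',Y''), each distributed as L(X)⊗L(Y), such that P[(X',Y')=(0,i+d) and (X'',Y'')=(i,0)] = P[(X',Y')=(i,0) and (X'',Y'')=(0,i+d)] = q and P[(X',Y')=(X'',Y'')] = 1−2q. In particular the difference (X'+Y')−(X''+Y'') equals d with probability q, equals −d with probability q, and equals 0 with probability 1−2q. -/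
open MeasureTheory ProbabilityTheory

/-- Display (2.4)/(2.5): existence of the pair coupling with overlap `q`. -/
theorem stmt2 {Ω : Type*} [MeasurableSpace Ω] (P : Measure Ω) [IsProbabilityMeasure P]
    (X Y : Ω → ℕ) (hX : Measurable X) (hY : Measurable Y) (hXY : IndepFun X Y P)
    (i d : ℕ) (hi : 1 ≤ i) (hd : 1 ≤ d)
    (q : ℝ)
    (hq : q = min ((P {ω | X ω = 0}).toReal * (P {ω | Y ω = i + d}).toReal)
                  ((P {ω | X ω = i}).toReal * (P {ω | Y ω = 0}).toReal)) :
    ∃ (Ω' : Type) (_ : MeasurableSpace Ω') (P' : Measure Ω'),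
      IsProbabilityMeasure P' ∧
      ∃ X' Y' X'' Y'' : Ω' → ℕ,
        Measure.map (fun ω => (X' ω, Y' ω)) P'
          = (Measure.map X P).prod (Measure.map Y P) ∧
        Measure.map (fun ω => (X'' ω, Y'' ω)) P'
          = (Measure.map X P).prod (Measure.map Y P) ∧
        (P' {ω | (X' ω, Y' ω) = (0, i + d) ∧ (X'' ω, Y'' ω) = (i, 0)}).toReal = q ∧
        (P' {ω | (X' ω, Y' ω) = (i, 0) ∧ (X'' ω, Y'' ω) = (0, i + d)}).toReal = q ∧
        (P' {ω | (X' ω, Y' ω) = (X'' ω, Y'' ω)}).toReal = 1 - 2 * q ∧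
        (P' {ω | ((X' ω : ℤ) + Y' ω) - ((X'' ω : ℤ) + Y'' ω) = d}).toReal = q ∧
        (P' {ω | ((X' ω : ℤ) + Y' ω) - ((X'' ω : ℤ) + Y'' ω) = -(d : ℤ)}).toReal = q ∧
        (P' {ω | ((X' ω : ℤ) + Y' ω) - ((X'' ω : ℤ) + Y'' ω) = 0}).toReal = 1 - 2 * q := by
  classical
  set μ := Measure.map X P with hμdef
  set ν := Measure.map Y P with hνdef
  have hμ : IsProbabilityMeasure μ := Measure.isProbabilityMeasure_map hX.aemeasurable
  have hν : IsProbabilityMeasure ν := Measure.isProbabilityMeasure_map hY.aemeasurable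
  set π := μ.prod ν with hπdef
  have hπ : IsProbabilityMeasure π := by infer_instance
  set u : ℕ × ℕ := (0, i + d) with hudef
  set v : ℕ × ℕ := (i, 0) with hvdef
  have huv : u ≠ v := by
    intro h
    rw [hudef, hvdef, Prod.mk.injEq] at h
    omega
  set a := π {u} with hadef
  set b := π {v} with hbdef
  set qe := min a b with hqedef
  have hqa : qe ≤ a := min_le_left _ _
  have hqb : qe ≤ b := min_le_right _ _
  have hab : a + b ≤ 1 := by
    have : π {u} + π {v} = π ({u} ∪ {v}) :=
      (measure_union (Set.disjoint_singleton.mpr huv) (measurableSet_singleton v)).symm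
    rw [hadef, hbdef, this]
    exact prob_le_one
  -- the measure to subtract
  set η : Measure (ℕ × ℕ) := qe • Measure.dirac u + qe • Measure.dirac v with hηdef
  have hηle : η ≤ π := by
    intro s
    by_cases hu : u ∈ s <;> by_cases hv : v ∈ s <;>
      simp only [hηdef, Measure.add_apply, Measure.smul_apply, smul_eq_mul,
        Measure.dirac_apply, Set.indicator_apply, hu, hv, if_pos, if_neg, if_true, if_false,
        Pi.one_apply, mul_one, mul_zero, add_zero, zero_add, zero_le]
    · calc qe + qe ≤ a + b := add_le_add hqa hqb
        _ = π ({u} ∪ {v}) :=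
          (measure_union (Set.disjoint_singleton.mpr huv) (measurableSet_singleton v)).symm
        _ ≤ π s := by
          apply measure_mono
          rw [Set.union_subset_iff]
          exact ⟨Set.singleton_subset_iff.mpr hu, Set.singleton_subset_iff.mpr hv⟩
    · exact hqa.trans (measure_mono (Set.singleton_subset_iff.mpr hu))
    · exact hqb.trans (measure_mono (Set.singleton_subset_iff.mpr hv))
  have hqetop : qe < ⊤ := lt_of_le_of_lt (hqa.trans prob_le_one) ENNReal.one_lt_top
  have hηfin : IsFiniteMeasure η := by
    constructor
    rw [hηdef]
    simp only [Measure.add_apply, Measure.smul_apply, smul_eq_mul, measure_univ, mul_one]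
    exact ENNReal.add_lt_top.mpr ⟨hqetop, hqetop⟩
  set ρ : Measure (ℕ × ℕ) := π - η with hρdef
  have hρadd : ρ + η = π := Measure.sub_add_cancel_of_le hηle
  have hdiag : Measurable fun x : ℕ × ℕ => (x, x) := measurable_id.prodMk measurable_id
  -- the coupling measure
  set P' : Measure ((ℕ × ℕ) × (ℕ × ℕ)) :=
    ρ.map (fun x => (x, x)) + qe • Measure.dirac (u, v) + qe • Measure.dirac (v, u) with hP'def
  -- general evaluation formula
  have key : ∀ s : Set ((ℕ × ℕ) × (ℕ × ℕ)),
      P' s = ρ ((fun x => (x, x)) ⁻¹' s) + qe * s.indicator 1 (u, v) + qe * s.indicator 1 (v, u) := by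
    intro s
    have hs : MeasurableSet s := s.to_countable.measurableSet
    simp [hP'def, Measure.add_apply, Measure.smul_apply, smul_eq_mul,
      Measure.map_apply hdiag hs, Measure.dirac_apply]
  -- total masses and finiteness
  have hρuniv : ρ Set.univ + (qe + qe) = 1 := by
    have := congrArg (fun m : Measure (ℕ × ℕ) => m Set.univ) hρadd
    simpa [hηdef, Measure.add_apply, Measure.smul_apply, smul_eq_mul] using this
  have hρfin : ρ Set.univ ≠ ⊤ := by
    intro h; rw [h] at hρuniv; simp at hρuniv
  have hqefin : qe ≠ ⊤ := by
    intro h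
    rw [h] at hρuniv
    simp at hρuniv
  have hP'prob : IsProbabilityMeasure P' := by
    constructor
    rw [key]
    simp only [Set.preimage_univ, Set.indicator_univ, Pi.one_apply, mul_one]
    rw [add_assoc]
    exact hρuniv
  -- identification of qe.toReal with q
  have hMapX : ∀ n : ℕ, μ {n} = P {ω | X ω = n} := by
    intro n
    rw [hμdef, Measure.map_apply hX (measurableSet_singleton n)]
    rfl
  have hMapY : ∀ n : ℕ, ν {n} = P {ω | Y ω = n} := by
    intro n
    rw [hνdef, Measure.map_apply hY (measurableSet_singleton n)]
    rfl
  have haval : a = P {ω | X ω = 0} * P {ω | Y ω = i + d} := by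
    rw [hadef, hudef, ← Set.singleton_prod_singleton, hπdef, Measure.prod_prod, hMapX, hMapY]
  have hbval : b = P {ω | X ω = i} * P {ω | Y ω = 0} := by
    rw [hbdef, hvdef, ← Set.singleton_prod_singleton, hπdef, Measure.prod_prod, hMapX, hMapY]
  have hafin : a ≠ ⊤ := by rw [hadef]; exact measure_ne_top π _
  have hbfin : b ≠ ⊤ := by rw [hbdef]; exact measure_ne_top π _
  have hqeval : qe.toReal = q := by
    rw [hqedef, ENNReal.toReal_min hafin hbfin, haval, hbval, hq,
      ENNReal.toReal_mul, ENNReal.toReal_mul]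
  have hρval : (ρ Set.univ).toReal = 1 - 2 * q := by
    have := congrArg ENNReal.toReal hρuniv
    rw [ENNReal.toReal_add hρfin (by simp [hqefin]),
      ENNReal.toReal_add hqefin hqefin, hqeval, ENNReal.toReal_one] at this
    linarith
  -- the random variables
  refine ⟨(ℕ × ℕ) × (ℕ × ℕ), inferInstance, P', hP'prob,
    (fun ω => ω.1.1), (fun ω => ω.1.2), (fun ω => ω.2.1), (fun ω => ω.2.2), ?_, ?_, ?_, ?_, ?_, ?_, ?_, ?_⟩
  · -- first marginal
    have h1 : (fun ω : (ℕ × ℕ) × (ℕ × ℕ) => (ω.1.1, ω.1.2)) = Prod.fst := by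
      funext ω; rfl
    rw [h1, hP'def]
    rw [Measure.map_add _ _ measurable_fst, Measure.map_add _ _ measurable_fst,
      Measure.map_smul, Measure.map_smul, Measure.map_dirac' measurable_fst,
      Measure.map_dirac' measurable_fst, Measure.map_map measurable_fst hdiag]
    have : (Prod.fst ∘ fun x : ℕ × ℕ => (x, x)) = id := rfl
    rw [this, Measure.map_id]
    rw [add_assoc, ← hηdef, hρadd]
  · -- second marginal
    have h1 : (fun ω : (ℕ × ℕ) × (ℕ × ℕ) => (ω.2.1, ω.2.2)) = Prod.snd := by
      funext ω; rfl
    rw [h1, hP'def]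
    rw [Measure.map_add _ _ measurable_snd, Measure.map_add _ _ measurable_snd,
      Measure.map_smul, Measure.map_smul, Measure.map_dirac' measurable_snd,
      Measure.map_dirac' measurable_snd, Measure.map_map measurable_snd hdiag]
    have : (Prod.snd ∘ fun x : ℕ × ℕ => (x, x)) = id := rfl
    rw [this, Measure.map_id]
    have : qe • Measure.dirac v + qe • Measure.dirac u = η := by
      rw [hηdef, add_comm]
    rw [add_assoc, this, hρadd]
  · -- P'((u,v)) = q
    rw [key]
    have h1 : (fun x : ℕ × ℕ => (x, x)) ⁻¹' {ω : (ℕ × ℕ) × (ℕ × ℕ) |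
        (ω.1.1, ω.1.2) = (0, i + d) ∧ (ω.2.1, ω.2.2) = (i, 0)} = ∅ := by
      ext x
      simp only [Set.mem_preimage, Set.mem_setOf_eq, Set.mem_empty_iff_false, iff_false,
        Prod.mk.injEq, not_and]
      intro h1 h2 h3; omega
    rw [h1]
    have h2 : (u, v) ∈ {ω : (ℕ × ℕ) × (ℕ × ℕ) |
        (ω.1.1, ω.1.2) = (0, i + d) ∧ (ω.2.1, ω.2.2) = (i, 0)} := by
      simp [hudef, hvdef]
    have h3 : (v, u) ∉ {ω : (ℕ × ℕ) × (ℕ × ℕ) |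
        (ω.1.1, ω.1.2) = (0, i + d) ∧ (ω.2.1, ω.2.2) = (i, 0)} := by
      simp only [Set.mem_setOf_eq, hudef, hvdef, Prod.mk.injEq, not_and]
      intro h; omega
    rw [Set.indicator_of_mem h2, Set.indicator_of_notMem h3]
    simp [hqeval]
  · -- P'((v,u)) = q
    rw [key]
    have h1 : (fun x : ℕ × ℕ => (x, x)) ⁻¹' {ω : (ℕ × ℕ) × (ℕ × ℕ) |
        (ω.1.1, ω.1.2) = (i, 0) ∧ (ω.2.1, ω.2.2) = (0, i + d)} = ∅ := by
      ext x
      simp only [Set.mem_preimage, Set.mem_setOf_eq, Set.mem_empty_iff_false, iff_false,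
        Prod.mk.injEq, not_and]
      intro h1 h2 h3; omega
    rw [h1]
    have h2 : (u, v) ∉ {ω : (ℕ × ℕ) × (ℕ × ℕ) |
        (ω.1.1, ω.1.2) = (i, 0) ∧ (ω.2.1, ω.2.2) = (0, i + d)} := by
      simp only [Set.mem_setOf_eq, hudef, hvdef, Prod.mk.injEq, not_and]
      intro h; omega
    have h3 : (v, u) ∈ {ω : (ℕ × ℕ) × (ℕ × ℕ) |
        (ω.1.1, ω.1.2) = (i, 0) ∧ (ω.2.1, ω.2.2) = (0, i + d)} := by
      simp [hudef, hvdef]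
    rw [Set.indicator_of_mem h3, Set.indicator_of_notMem h2]
    simp [hqeval]
  · -- diagonal
    rw [key]
    have h1 : (fun x : ℕ × ℕ => (x, x)) ⁻¹' {ω : (ℕ × ℕ) × (ℕ × ℕ) |
        (ω.1.1, ω.1.2) = (ω.2.1, ω.2.2)} = Set.univ := by
      ext x; simp
    have h2 : (u, v) ∉ {ω : (ℕ × ℕ) × (ℕ × ℕ) | (ω.1.1, ω.1.2) = (ω.2.1, ω.2.2)} := by
      simp only [Set.mem_setOf_eq, hudef, hvdef, Prod.mk.injEq, not_and]
      intro h; omega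
    have h3 : (v, u) ∉ {ω : (ℕ × ℕ) × (ℕ × ℕ) | (ω.1.1, ω.1.2) = (ω.2.1, ω.2.2)} := by
      simp only [Set.mem_setOf_eq, hudef, hvdef, Prod.mk.injEq, not_and]
      intro h; omega
    rw [h1, Set.indicator_of_notMem h2, Set.indicator_of_notMem h3]
    simpa using hρval
  · -- S = d
    rw [key]
    have h1 : (fun x : ℕ × ℕ => (x, x)) ⁻¹' {ω : (ℕ × ℕ) × (ℕ × ℕ) |
        ((ω.1.1 : ℤ) + ω.1.2) - ((ω.2.1 : ℤ) + ω.2.2) = d} = ∅ := by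
      ext x
      simp only [Set.mem_preimage, Set.mem_setOf_eq, Set.mem_empty_iff_false, iff_false]
      omega
    have h2 : (u, v) ∈ {ω : (ℕ × ℕ) × (ℕ × ℕ) |
        ((ω.1.1 : ℤ) + ω.1.2) - ((ω.2.1 : ℤ) + ω.2.2) = d} := by
      simp only [Set.mem_setOf_eq, hudef, hvdef]
      push_cast
      ring
    have h3 : (v, u) ∉ {ω : (ℕ × ℕ) × (ℕ × ℕ) |
        ((ω.1.1 : ℤ) + ω.1.2) - ((ω.2.1 : ℤ) + ω.2.2) = d} := by
      simp only [Set.mem_setOf_eq, hudef, hvdef]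
      push_cast
      omega
    rw [h1, Set.indicator_of_mem h2, Set.indicator_of_notMem h3]
    simp [hqeval]
  · -- S = -d
    rw [key]
    have h1 : (fun x : ℕ × ℕ => (x, x)) ⁻¹' {ω : (ℕ × ℕ) × (ℕ × ℕ) |
        ((ω.1.1 : ℤ) + ω.1.2) - ((ω.2.1 : ℤ) + ω.2.2) = -(d : ℤ)} = ∅ := by
      ext x
      simp only [Set.mem_preimage, Set.mem_setOf_eq, Set.mem_empty_iff_false, iff_false]
      omega
    have h2 : (u, v) ∉ {ω : (ℕ × ℕ) × (ℕ × ℕ) |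
        ((ω.1.1 : ℤ) + ω.1.2) - ((ω.2.1 : ℤ) + ω.2.2) = -(d : ℤ)} := by
      simp only [Set.mem_setOf_eq, hudef, hvdef]
      push_cast
      omega
    have h3 : (v, u) ∈ {ω : (ℕ × ℕ) × (ℕ × ℕ) |
        ((ω.1.1 : ℤ) + ω.1.2) - ((ω.2.1 : ℤ) + ω.2.2) = -(d : ℤ)} := by
      simp only [Set.mem_setOf_eq, hudef, hvdef]
      push_cast
      ring
    rw [h1, Set.indicator_of_mem h3, Set.indicator_of_notMem h2]
    simp [hqeval]
  · -- S = 0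
    rw [key]
    have h1 : (fun x : ℕ × ℕ => (x, x)) ⁻¹' {ω : (ℕ × ℕ) × (ℕ × ℕ) |
        ((ω.1.1 : ℤ) + ω.1.2) - ((ω.2.1 : ℤ) + ω.2.2) = 0} = Set.univ := by
      ext x
      simp only [Set.mem_preimage, Set.mem_setOf_eq, Set.mem_univ, iff_true]
      ring
    have h2 : (u, v) ∉ {ω : (ℕ × ℕ) × (ℕ × ℕ) |
        ((ω.1.1 : ℤ) + ω.1.2) - ((ω.2.1 : ℤ) + ω.2.2) = 0} := by
      simp only [Set.mem_setOf_eq, hudef, hvdef]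
      push_cast
      omega
    have h3 : (v, u) ∉ {ω : (ℕ × ℕ) × (ℕ × ℕ) |
        ((ω.1.1 : ℤ) + ω.1.2) - ((ω.2.1 : ℤ) + ω.2.2) = 0} := by
      simp only [Set.mem_setOf_eq, hudef, hvdef]
      push_cast
      omega
    rw [h1, Set.indicator_of_notMem h2, Set.indicator_of_notMem h3]
    simpa using hρval
end

section
/- Let θ > 0, let (θ_i)_{i≥1} be a non-negative real sequence with θ_* := sup_i θ_i < ∞ and θ*' := max(θ, θ_*), and for m ∈ ℕ set δ(m,θ) := sup_{j≥0} | (1/m)·∑_{i=1}^m θ_{jm+i} − θ |. Let (y_i)_{i≥1} be a real sequence, let 0 ≤ l < n and m ≥ 1, and set ‖y‖ := max_{l<i≤n} |y_i| and ‖Δy‖ := max_{l<i<n} |y_{i+1}−y_i|. Then |∑_{i=l+1}^n (θ_i − θ)·y_i| ≤ (2mθ*' + n·δ(m,θ))·‖y‖ + θ_*·(nm/8)·‖Δy‖. -/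
open Finset

/-!
Cut `(l, n]` into the aligned blocks `(jm, (j+1)m]` it contains and at most two partial blocks
of length `< m`, each of which costs at most `m θ*' ‖y‖`. On a full block with average `θ̄`,
split `θᵢ - θ = (θᵢ - θ̄) + (θ̄ - θ)`; the second part costs `m δ ‖y‖`. Abel summation turns
`∑ (θᵢ - θ̄) yᵢ` into `-∑ₜ Dₜ (y_{t+1} - y_t)`, where `Dₜ` is the discrepancy between the partial
sums of the block and the straight line through them, and for weights in `[0, A]` with total `S`
one has `∑ₜ |Dₜ| ≤ S (mA - S) / (2A) ≤ A m² / 8`.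
-/

noncomputable def discrepancy (a : ℕ → ℝ) (m t : ℕ) : ℝ :=
  ∑ i ∈ range t, a i - t * (∑ i ∈ range m, a i) / m

lemma discrepancy_succ (a : ℕ → ℝ) (m t : ℕ) :
    discrepancy a (m + 1) t = discrepancy a m t +
      ((∑ i ∈ range m, a i) / m - (∑ i ∈ range (m + 1), a i) / (m + 1)) * t := by
  simp only [discrepancy]; push_cast; ring

lemma discrepancy_self (a : ℕ → ℝ) (m : ℕ) : discrepancy a m m = 0 := by
  rcases m.eq_zero_or_pos with rfl | hm
  · simp [discrepancy]
  · simp only [discrepancy]; field_simp; ring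

/-- Only this homogeneous form, not the bound `A m² / 8` itself, survives the induction on `m`. -/
lemma two_mul_mul_sum_abs_discrepancy_le (a : ℕ → ℝ) (A : ℝ) (m : ℕ)
    (ha : ∀ i < m, 0 ≤ a i ∧ a i ≤ A) :
    2 * A * ∑ t ∈ range (m + 1), |discrepancy a m t| ≤
      (∑ i ∈ range m, a i) * (m * A - ∑ i ∈ range m, a i) := by
  induction m with
  | zero => simp [discrepancy]
  | succ m ih =>
    set S := ∑ i ∈ range m, a i
    set x := a m
    obtain ⟨hx0, hxA⟩ := ha m m.lt_succ_self
    have hA : 0 ≤ A := hx0.trans hxA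
    have hS0 : 0 ≤ S := sum_nonneg fun i hi => (ha i (by simp at hi; omega)).1
    have hSA : S ≤ m * A := by
      simpa using sum_le_card_nsmul (range m) a A fun i hi => (ha i (by simp at hi; omega)).2
    set c := S / m - (S + x) / (m + 1)
    have hc : |c| * (m * (m + 1)) = |S - m * x| := by
      rcases m.eq_zero_or_pos with rfl | hm
      · simp [S]
      · rw [← abs_of_pos (by positivity : (0 : ℝ) < m * (m + 1)), ← abs_mul]
        congr 1
        simp only [c]; field_simp; ring
    have hgauss : (∑ t ∈ range (m + 1), (t : ℝ)) * 2 = m * (m + 1) := by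
      have h := sum_range_id_mul_two (m + 1)
      rw [Nat.add_sub_cancel, Nat.mul_comm (m + 1)] at h
      rw [← Nat.cast_sum]
      exact_mod_cast h
    have hstep : ∑ t ∈ range (m + 1 + 1), |discrepancy a (m + 1) t| ≤
        ∑ t ∈ range (m + 1), |discrepancy a m t| + |c| * (m * (m + 1) / 2) := by
      rw [sum_range_succ, discrepancy_self, abs_zero, add_zero]
      calc ∑ t ∈ range (m + 1), |discrepancy a (m + 1) t|
          ≤ ∑ t ∈ range (m + 1), (|discrepancy a m t| + |c| * t) := by
            gcongr with t
            rw [discrepancy_succ, sum_range_succ]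
            exact (abs_add_le _ _).trans (by rw [abs_mul, Nat.abs_cast])
        _ = _ := by rw [sum_add_distrib, ← mul_sum, ← hgauss]; ring
    have ih := ih fun i hi => ha i (by omega)
    rw [show ∑ i ∈ range (m + 1), a i = S + x from sum_range_succ a m]
    push_cast
    calc 2 * A * ∑ t ∈ range (m + 1 + 1), |discrepancy a (m + 1) t|
        ≤ S * (m * A - S) + A * |S - m * x| := by
          rw [← hc]; nlinarith [mul_le_mul_of_nonneg_left hstep (by positivity : 0 ≤ 2 * A)]
      _ ≤ (S + x) * ((m + 1) * A - (S + x)) := by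
          rcases abs_cases (S - m * x) with ⟨h, _⟩ | ⟨h, _⟩ <;> rw [h] <;>
            nlinarith [mul_nonneg hx0 (sub_nonneg.2 hSA), mul_nonneg hx0 (sub_nonneg.2 hxA),
              mul_nonneg hS0 (sub_nonneg.2 hxA)]

lemma sum_abs_discrepancy_le (a : ℕ → ℝ) (A : ℝ) (m : ℕ) (ha : ∀ i < m, 0 ≤ a i ∧ a i ≤ A) :
    ∑ t ∈ range (m + 1), |discrepancy a m t| ≤ A * m ^ 2 / 8 := by
  rcases m.eq_zero_or_pos with rfl | hm
  · simp [discrepancy]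
  have hA : 0 ≤ A := (ha 0 hm).1.trans (ha 0 hm).2
  rcases hA.eq_or_lt with rfl | hA
  · have ha0 : ∀ i < m, a i = 0 := fun i hi => le_antisymm (ha i hi).2 (ha i hi).1
    have hsum0 : ∀ t ≤ m, ∑ i ∈ range t, a i = 0 := fun t ht =>
      sum_eq_zero fun i hi => ha0 i (by simp at hi; omega)
    refine (sum_eq_zero fun t ht => ?_).le.trans (by simp)
    simp [discrepancy, hsum0 m le_rfl, hsum0 t (by simp at ht; omega)]
  · have h := two_mul_mul_sum_abs_discrepancy_le a A m ha
    refine le_of_mul_le_mul_left ?_ (by positivity : 0 < 2 * A)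
    nlinarith [sq_nonneg (m * A - 2 * ∑ i ∈ range m, a i)]

lemma abs_sum_sub_average_mul_le (a y : ℕ → ℝ) (m : ℕ) (A D : ℝ) (hD : 0 ≤ D)
    (ha : ∀ i < m, 0 ≤ a i ∧ a i ≤ A) (hy : ∀ i, i + 1 < m → |y (i + 1) - y i| ≤ D) :
    |∑ i ∈ range m, (a i - (∑ j ∈ range m, a j) / m) * y i| ≤ A * D * m ^ 2 / 8 := by
  have hpartial : ∀ t, ∑ i ∈ range t, (a i - (∑ j ∈ range m, a j) / m) = discrepancy a m t := by
    intro t; simp [discrepancy, sum_sub_distrib]; ring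
  have hparts := sum_range_by_parts y (fun i => a i - (∑ j ∈ range m, a j) / m) m
  simp only [smul_eq_mul, hpartial, discrepancy_self, mul_zero, zero_sub] at hparts
  rw [sum_congr rfl fun i _ => mul_comm _ _, hparts, abs_neg]
  calc |∑ i ∈ range (m - 1), (y (i + 1) - y i) * discrepancy a m (i + 1)|
      ≤ ∑ i ∈ range (m - 1), D * |discrepancy a m (i + 1)| := by
        refine (abs_sum_le_sum_abs _ _).trans (sum_le_sum fun i hi => ?_)
        rw [abs_mul]
        exact mul_le_mul_of_nonneg_right (hy i (by simp at hi; omega)) (abs_nonneg _)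
    _ ≤ D * ∑ t ∈ range (m + 1), |discrepancy a m t| := by
        rw [sum_range_succ', mul_add, mul_sum]
        refine le_add_of_le_of_nonneg ?_ (by positivity)
        exact sum_le_sum_of_subset_of_nonneg (range_subset_range.2 (m.sub_le 1))
          fun _ _ _ => by positivity
    _ ≤ D * (A * m ^ 2 / 8) := by gcongr; exact sum_abs_discrepancy_le a A m ha
    _ = A * D * m ^ 2 / 8 := by ring

lemma abs_sum_sub_const_mul_le (a y : ℕ → ℝ) (m : ℕ) (θ A D Y : ℝ) (hD : 0 ≤ D)
    (ha : ∀ i < m, 0 ≤ a i ∧ a i ≤ A) (hy : ∀ i < m, |y i| ≤ Y)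
    (hΔy : ∀ i, i + 1 < m → |y (i + 1) - y i| ≤ D) :
    |∑ i ∈ range m, (a i - θ) * y i| ≤
      m * |(∑ i ∈ range m, a i) / m - θ| * Y + A * D * m ^ 2 / 8 := by
  set μ := (∑ i ∈ range m, a i) / m
  have hsplit : ∑ i ∈ range m, (a i - θ) * y i =
      ∑ i ∈ range m, (a i - μ) * y i + (μ - θ) * ∑ i ∈ range m, y i := by
    rw [mul_sum, ← sum_add_distrib]; exact sum_congr rfl fun i _ => by ring
  have hmean : |(μ - θ) * ∑ i ∈ range m, y i| ≤ m * |μ - θ| * Y := by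
    rw [abs_mul, mul_comm (m : ℝ), mul_assoc]
    gcongr
    exact (abs_sum_le_sum_abs _ _).trans
      (by simpa using sum_le_card_nsmul (range m) _ Y fun i hi => hy i (mem_range.1 hi))
  rw [hsplit]
  exact (abs_add_le _ _).trans (by linarith [abs_sum_sub_average_mul_le a y m A D hD ha hΔy])

lemma sum_Ioc_add_eq_sum_range (f : ℕ → ℝ) (c m : ℕ) :
    ∑ i ∈ Ioc c (c + m), f i = ∑ i ∈ range m, f (c + 1 + i) := by
  rw [← Ico_add_one_add_one_eq_Ioc, sum_Ico_eq_sum_range, show c + m + 1 - (c + 1) = m by omega]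

lemma sum_Icc_one_add_eq_sum_range (f : ℕ → ℝ) (c m : ℕ) :
    ∑ i ∈ Icc 1 m, f (c + i) = ∑ i ∈ range m, f (c + 1 + i) := by
  rw [← Ico_add_one_right_eq_Icc, sum_Ico_eq_sum_range, Nat.add_sub_cancel]
  simp only [add_assoc, add_comm 1]

lemma sum_Ioc_mul_eq_sum_Ico_sum_range (f : ℕ → ℝ) (m : ℕ) {j₀ j₁ : ℕ} (h : j₀ ≤ j₁) :
    ∑ i ∈ Ioc (j₀ * m) (j₁ * m), f i = ∑ j ∈ Ico j₀ j₁, ∑ i ∈ range m, f (j * m + 1 + i) := by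
  induction j₁, h using Nat.le_induction with
  | base => simp
  | succ j₁ h ih =>
    rw [← sum_Ioc_consecutive f (Nat.mul_le_mul_right m h) (Nat.mul_le_mul_right m j₁.le_succ),
      ih, sum_Ico_succ_top h, Nat.succ_mul, sum_Ioc_add_eq_sum_range]

lemma abs_sum_Ioc_le_of_abs_le (f : ℕ → ℝ) {a b : ℕ} {C : ℝ} (h : ∀ i ∈ Ioc a b, |f i| ≤ C) :
    |∑ i ∈ Ioc a b, f i| ≤ (b - a : ℕ) * C :=
  (abs_sum_le_sum_abs _ _).trans (by simpa using sum_le_card_nsmul _ _ _ h)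

lemma abs_sum_Ioc_le_of_block_bound (f : ℕ → ℝ) {l n m : ℕ} (hm : 0 < m) {C β : ℝ}
    (hC0 : 0 ≤ C) (hβ0 : 0 ≤ β) (hC : ∀ i ∈ Ioc l n, |f i| ≤ C)
    (hblock : ∀ j, l ≤ j * m → j * m + m ≤ n → |∑ i ∈ range m, f (j * m + 1 + i)| ≤ m * β) :
    |∑ i ∈ Ioc l n, f i| ≤ 2 * m * C + (n - l : ℕ) * β := by
  obtain ⟨j₀, hj₀⟩ : ∃ j₀, l ≤ j₀ * m ∧ j₀ * m < l + m := ⟨(l + m - 1) / m, by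
    have := Nat.div_add_mod' (l + m - 1) m; have := Nat.mod_lt (l + m - 1) hm; omega⟩
  obtain ⟨j₁, hj₁⟩ : ∃ j₁, j₁ * m ≤ n ∧ n < j₁ * m + m := ⟨n / m, by
    have := Nat.div_add_mod' n m; have := Nat.mod_lt n hm; omega⟩
  have hsub : ∀ {a b}, l ≤ a → b ≤ n → ∀ i ∈ Ioc a b, |f i| ≤ C := fun ha hb i hi =>
    hC i (Ioc_subset_Ioc ha hb hi)
  by_cases hj : j₀ ≤ j₁
  · have hAB : j₀ * m ≤ j₁ * m := Nat.mul_le_mul_right m hj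
    rw [← sum_Ioc_consecutive f hj₀.1 (hAB.trans hj₁.1), ← sum_Ioc_consecutive f hAB hj₁.1,
      sum_Ioc_mul_eq_sum_Ico_sum_range f m hj]
    have hleft := abs_sum_Ioc_le_of_abs_le f (hsub le_rfl (hAB.trans hj₁.1))
    have hright := abs_sum_Ioc_le_of_abs_le f (hsub (hj₀.1.trans hAB) le_rfl)
    have hmid : |∑ j ∈ Ico j₀ j₁, ∑ i ∈ range m, f (j * m + 1 + i)| ≤ (j₁ - j₀ : ℕ) * (m * β) :=
      (abs_sum_le_sum_abs _ _).trans <| by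
        simpa using sum_le_card_nsmul (Ico j₀ j₁) _ _ fun j hj => hblock j
          (hj₀.1.trans (Nat.mul_le_mul_right m (mem_Ico.1 hj).1))
          ((Nat.succ_mul j m ▸ Nat.mul_le_mul_right m (mem_Ico.1 hj).2).trans hj₁.1)
    have hlen₀ : ((j₀ * m - l : ℕ) : ℝ) ≤ m := by exact_mod_cast (by omega : j₀ * m - l ≤ m)
    have hlen₁ : ((n - j₁ * m : ℕ) : ℝ) ≤ m := by exact_mod_cast (by omega : n - j₁ * m ≤ m)
    have hlen : ((j₁ - j₀ : ℕ) : ℝ) * m ≤ (n - l : ℕ) := by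
      exact_mod_cast (show (j₁ - j₀) * m ≤ n - l by rw [Nat.sub_mul]; omega)
    linarith [abs_add_le (∑ i ∈ Ioc l (j₀ * m), f i)
        (∑ j ∈ Ico j₀ j₁, ∑ i ∈ range m, f (j * m + 1 + i) + ∑ i ∈ Ioc (j₁ * m) n, f i),
      abs_add_le (∑ j ∈ Ico j₀ j₁, ∑ i ∈ range m, f (j * m + 1 + i)) (∑ i ∈ Ioc (j₁ * m) n, f i),
      mul_le_mul_of_nonneg_right hlen₀ hC0, mul_le_mul_of_nonneg_right hlen₁ hC0,
      mul_le_mul_of_nonneg_right hlen hβ0]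
  · have hnl : n - l ≤ m := by
      have := Nat.mul_le_mul_right m (not_le.1 hj); rw [Nat.succ_mul] at this; omega
    calc |∑ i ∈ Ioc l n, f i| ≤ (n - l : ℕ) * C := abs_sum_Ioc_le_of_abs_le f hC
      _ ≤ m * C := by gcongr
      _ ≤ 2 * m * C + (n - l : ℕ) * β := by nlinarith [(by positivity : (0:ℝ) ≤ (n - l : ℕ) * β)]

lemma abs_sub_le_max_of_nonneg_of_le {x a b : ℝ} (hb : 0 ≤ b) (hx : 0 ≤ x) (hxa : x ≤ a) :
    |x - b| ≤ max b a :=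
  abs_sub_le_of_nonneg_of_le hx (hxa.trans (le_max_right _ _)) hb (le_max_left _ _)

lemma le_biSup_finset {ι : Type*} (f : ι → ℝ) {s : Finset ι} {i : ι} (hi : i ∈ s) :
    f i ≤ ⨆ j ∈ s, f j :=
  le_ciSup₂ (f := fun j (_ : j ∈ s) => f j)
    ((s.finite_toSet.image f).bddAbove.mono fun x hx => by
      simp only [Set.mem_iUnion, Set.mem_range] at hx
      obtain ⟨j, hj, rfl⟩ := hx
      exact ⟨j, hj, rfl⟩) i hi

lemma abs_sum_range_div_sub_le_iSup (θi : ℕ → ℝ) {θ A : ℝ} {m : ℕ} (hθ : 0 ≤ θ) (hm : 0 < m)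
    (hθi : ∀ i, 1 ≤ i → 0 ≤ θi i ∧ θi i ≤ A) (j : ℕ) :
    |(∑ i ∈ range m, θi (j * m + 1 + i)) / m - θ| ≤
      ⨆ j : ℕ, |(1 / (m : ℝ)) * ∑ i ∈ Icc 1 m, θi (j * m + i) - θ| := by
  have hmean : ∀ k, (1 / (m : ℝ)) * ∑ i ∈ Icc 1 m, θi (k * m + i) =
      (∑ i ∈ range m, θi (k * m + 1 + i)) / m := fun k => by
    rw [sum_Icc_one_add_eq_sum_range, one_div_mul_eq_div]
  rw [← hmean j]
  refine le_ciSup (f := fun j => |(1 / (m : ℝ)) * ∑ i ∈ Icc 1 m, θi (j * m + i) - θ|)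
    ⟨max θ A, ?_⟩ j
  rintro _ ⟨k, rfl⟩
  dsimp only
  rw [hmean k]
  refine abs_sub_le_max_of_nonneg_of_le hθ
    (div_nonneg (sum_nonneg fun i _ => (hθi _ (by omega)).1) m.cast_nonneg)
    ((div_le_iff₀ (by exact_mod_cast hm)).2 ?_)
  simpa [mul_comm] using sum_le_card_nsmul (range m) _ A fun i _ => (hθi _ (by omega)).2

theorem stmt3_general (θ : ℝ) (hθ : 0 < θ) (θi : ℕ → ℝ) (hnn : ∀ i, 0 ≤ θi i)
    (hbdd : BddAbove (Set.range fun i => θi (i + 1)))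
    (y : ℕ → ℝ) (l n m : ℕ) (hm : 1 ≤ m) :
    |∑ i ∈ Icc (l + 1) n, (θi i - θ) * y i| ≤
      (2 * m * max θ (⨆ i, θi (i + 1)) +
          n * ⨆ j : ℕ, |(1 / (m : ℝ)) * ∑ i ∈ Icc 1 m, θi (j * m + i) - θ|) *
        (⨆ i ∈ Icc (l + 1) n, |y i|) +
      (⨆ i, θi (i + 1)) * ((n : ℝ) * m / 8) * (⨆ i ∈ Ico (l + 1) n, |y (i + 1) - y i|) := by
  set θs := ⨆ i, θi (i + 1)
  set δ := ⨆ j : ℕ, |(1 / (m : ℝ)) * ∑ i ∈ Icc 1 m, θi (j * m + i) - θ|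
  set Y := ⨆ i ∈ Icc (l + 1) n, |y i|
  set D := ⨆ i ∈ Ico (l + 1) n, |y (i + 1) - y i|
  have hθi : ∀ i, 1 ≤ i → 0 ≤ θi i ∧ θi i ≤ θs := fun i hi =>
    ⟨hnn i, by simpa [Nat.sub_add_cancel hi] using le_ciSup hbdd (i - 1)⟩
  have hθs0 : 0 ≤ θs := (hθi 1 le_rfl).1.trans (hθi 1 le_rfl).2
  have hM0 : 0 ≤ max θ θs := hθ.le.trans (le_max_left _ _)
  have hY0 : 0 ≤ Y := Real.iSup_nonneg fun i => Real.iSup_nonneg fun _ => abs_nonneg _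
  have hD0 : 0 ≤ D := Real.iSup_nonneg fun i => Real.iSup_nonneg fun _ => abs_nonneg _
  have hδ := abs_sum_range_div_sub_le_iSup θi hθ.le hm hθi
  have hδ0 : 0 ≤ δ := (abs_nonneg _).trans (hδ 0)
  rw [Icc_add_one_left_eq_Ioc]
  refine (abs_sum_Ioc_le_of_block_bound _ hm (C := max θ θs * Y)
    (β := δ * Y + θs * (m * D / 8)) (mul_nonneg hM0 hY0) (by positivity) ?_ ?_).trans ?_
  · intro i hi
    rw [← Icc_add_one_left_eq_Ioc] at hi
    have hi₁ : 1 ≤ i := by simp at hi; omega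
    rw [abs_mul]
    exact mul_le_mul (abs_sub_le_max_of_nonneg_of_le hθ.le (hθi i hi₁).1 (hθi i hi₁).2)
      (le_biSup_finset (|y ·|) hi) (abs_nonneg _) hM0
  · intro j hl hn
    refine (abs_sum_sub_const_mul_le (fun i => θi (j * m + 1 + i)) (fun i => y (j * m + 1 + i)) m
      θ θs D Y hD0 (fun i _ => hθi _ (by omega))
      (fun i _ => le_biSup_finset (|y ·|) (by simp; omega))
      (fun i _ => le_biSup_finset (fun i => |y (i + 1) - y i|) (by simp; omega))).trans ?_
    rw [show (m : ℝ) * (δ * Y + θs * (m * D / 8)) = m * δ * Y + θs * D * m ^ 2 / 8 by ring]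
    gcongr
    exact hδ j
  · have hnl : ((n - l : ℕ) : ℝ) ≤ n := by exact_mod_cast n.sub_le l
    nlinarith [mul_le_mul_of_nonneg_right hnl (by positivity : 0 ≤ δ * Y + θs * (m * D / 8))]

/-- Lemma 5.1, first inequality. Here `θ_* = ⨆_{i≥1} θᵢ`, `θ*' = max(θ, θ_*)` and
`δ(m,θ) = sup_{j≥0} |(1/m)∑_{i=1}^m θ_{jm+i} − θ|`. -/
theorem stmt3 (θ : ℝ) (hθ : 0 < θ) (θi : ℕ → ℝ) (hnn : ∀ i, 0 ≤ θi i)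
    (hbdd : BddAbove (Set.range fun i => θi (i + 1)))
    (y : ℕ → ℝ) (l n m : ℕ) (hln : l < n) (hm : 1 ≤ m) :
    |∑ i ∈ Icc (l + 1) n, (θi i - θ) * y i| ≤
      (2 * m * max θ (⨆ i, θi (i + 1)) +
          n * ⨆ j : ℕ, |(1 / (m : ℝ)) * ∑ i ∈ Icc 1 m, θi (j * m + i) - θ|) *
        (⨆ i ∈ Icc (l + 1) n, |y i|) +
      (⨆ i, θi (i + 1)) * ((n : ℝ) * m / 8) * (⨆ i ∈ Ico (l + 1) n, |y (i + 1) - y i|) :=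
  stmt3_general θ hθ θi hnn hbdd y l n m hm
end

section
/- Let θ > 0, let (θ_i)_{i≥1} be a non-negative real sequence with θ_* := sup_i θ_i < ∞ and θ*' := max(θ, θ_*), and for m ∈ ℕ set δ(m,θ) := sup_{j≥0} | (1/m)·∑_{i=1}^m θ_{jm+i} − θ |. Let T be a ℤ₊-valued random variable, let g : ℤ₊ → ℝ be bounded with sup norm ‖g‖, and let 0 ≤ l < n and m ≥ 1. Then |∑_{i=l+1}^n (θ_i − θ)·E[g(T+i)]| ≤ ‖g‖·( 2θ*'m + n·δ(m,θ) + (1/4)·θ_*·m·n·d_TV(L(T), L(T+1)) ). -/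
/-
Write `b i = E g(T + i)`. Consecutive `b i` differ by at most `2‖g‖ d_TV(L(T), L(T+1))`, since
`b (i + 1)` integrates the same function against the law of `T + 1`. Cut `(l, n]` into blocks of
length `m` plus two partial blocks at the ends, which cost at most `θ*' ‖g‖ m` each. On a block,
replacing `θ` by the block average `θ̄` costs at most `m ‖g‖ δ(m, θ)`; what remains is
`∑ (θᵢ - θ̄) b i`, which summation by parts turns into `∑ eₖ (b k - b (k + 1))` with `eₖ` the
partial sums of `θᵢ - θ̄`. These form a path from `0` to `0` that rises at most `θ_* - θ̄` and
falls at most `θ̄` per step, and such a path of length `m` has `∑ |eₖ| ≤ θ_* m² / 8`: this is the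
tent bound when the path keeps one sign, and otherwise one can delete the smaller of its two
extreme points, which is at most `θ_* m / 8` in absolute value, and induct on `m`.
-/

open MeasureTheory ProbabilityTheory Finset

/-- Total variation distance between two measures. -/
noncomputable def dTV {α : Type*} [MeasurableSpace α] (μ ν : Measure α) : ℝ :=
  ⨆ s : {s : Set α // MeasurableSet s}, |(μ s.1).toReal - (ν s.1).toReal|

section TotalVariation

variable {α : Type*} [MeasurableSpace α] (μ ν : Measure α) [IsProbabilityMeasure μ]
  [IsProbabilityMeasure ν]

lemma abs_measureReal_sub_le_dTV {A : Set α} (hA : MeasurableSet A) :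
    |μ.real A - ν.real A| ≤ dTV μ ν := by
  refine le_ciSup
    (f := fun s : {s : Set α // MeasurableSet s} => |(μ s.1).toReal - (ν s.1).toReal|)
    ⟨1, ?_⟩ ⟨A, hA⟩
  rintro _ ⟨B, rfl⟩
  show |μ.real B.1 - ν.real B.1| ≤ 1
  simpa using abs_sub_le_of_le_of_le measureReal_nonneg (measureReal_le_one (μ := μ) (s := B))
    measureReal_nonneg (measureReal_le_one (μ := ν) (s := B))

lemma integrableOn_measureReal_le {ρ : Measure α} [IsFiniteMeasure ρ] (h : α → ℝ) (K : ℝ) :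
    IntegrableOn (fun t => ρ.real {a | t ≤ h a}) (Set.Ioc 0 K) := by
  refine Measure.integrableOn_of_bounded (M := ρ.real Set.univ) measure_Ioc_lt_top.ne ?_
    (Filter.Eventually.of_forall fun t => ?_)
  · refine (Measurable.ennreal_toReal (Antitone.measurable ?_)).aestronglyMeasurable
    exact fun _ _ hst => measure_mono fun _ ha => hst.trans ha
  · rw [Real.norm_of_nonneg measureReal_nonneg]
    exact measureReal_mono (Set.subset_univ _)

lemma integral_sub_integral_le_dTV {h : α → ℝ} (hh : Measurable h) {K : ℝ} (h0 : ∀ x, 0 ≤ h x)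
    (hK : ∀ x, h x ≤ K) : ∫ x, h x ∂μ - ∫ x, h x ∂ν ≤ K * dTV μ ν := by
  have hint : ∀ ρ : Measure α, [IsProbabilityMeasure ρ] →
      ∫ x, h x ∂ρ = ∫ t in Set.Ioc 0 K, ρ.real {a | t ≤ h a} := fun ρ _ =>
    (Integrable.of_bound hh.aestronglyMeasurable K (Filter.Eventually.of_forall fun x => by
      rw [Real.norm_of_nonneg (h0 x)]; exact hK x)).integral_eq_integral_Ioc_meas_le
      (Filter.Eventually.of_forall h0) (Filter.Eventually.of_forall hK)
  have hK0 : 0 ≤ K := by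
    obtain ⟨x⟩ := nonempty_of_isProbabilityMeasure μ
    exact (h0 x).trans (hK x)
  rw [hint μ, hint ν, sub_le_iff_le_add']
  calc ∫ t in Set.Ioc 0 K, μ.real {a | t ≤ h a}
      ≤ ∫ t in Set.Ioc 0 K, (ν.real {a | t ≤ h a} + dTV μ ν) := by
        refine setIntegral_mono (integrableOn_measureReal_le h K)
          ((integrableOn_measureReal_le h K).add (integrableOn_const measure_Ioc_lt_top.ne))
          fun t => ?_
        have := abs_measureReal_sub_le_dTV μ ν
          (measurableSet_le (f := fun _ => t) measurable_const hh)
        linarith [le_abs_self (μ.real {a | t ≤ h a} - ν.real {a | t ≤ h a})]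
    _ = (∫ t in Set.Ioc 0 K, ν.real {a | t ≤ h a}) + K * dTV μ ν := by
        rw [integral_add (integrableOn_measureReal_le h K)
          (integrableOn_const measure_Ioc_lt_top.ne), setIntegral_const,
          Real.volume_real_Ioc_of_le hK0, sub_zero, smul_eq_mul]

lemma abs_integral_sub_integral_le_dTV {f : α → ℝ} (hf : Measurable f) {C : ℝ}
    (hC : ∀ x, |f x| ≤ C) : |∫ x, f x ∂μ - ∫ x, f x ∂ν| ≤ 2 * C * dTV μ ν := by
  have hint : ∀ ρ : Measure α, [IsProbabilityMeasure ρ] → Integrable f ρ := fun ρ _ =>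
    Integrable.of_bound hf.aestronglyMeasurable C (Filter.Eventually.of_forall hC)
  have hup := integral_sub_integral_le_dTV μ ν (h := fun x => f x + C) (K := 2 * C)
    (hf.add_const C)
    (fun x => by linarith [neg_abs_le (f x), hC x]) (fun x => by linarith [le_abs_self (f x), hC x])
  have hdown := integral_sub_integral_le_dTV μ ν (h := fun x => C - f x) (K := 2 * C)
    (measurable_const.sub hf)
    (fun x => by linarith [le_abs_self (f x), hC x]) (fun x => by linarith [neg_abs_le (f x), hC x])
  rw [integral_add (hint μ) (integrable_const C), integral_add (hint ν) (integrable_const C)] at hup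
  rw [integral_sub (integrable_const C) (hint μ), integral_sub (integrable_const C) (hint ν)]
    at hdown
  simp only [integral_const, probReal_univ, one_smul] at hup hdown
  rw [abs_le]
  constructor <;> linarith

end TotalVariation

lemma min_mul_le_add_mul_add_div_four {s t x y : ℝ} (hs : 0 ≤ s) (ht : 0 ≤ t) (hx : 0 ≤ x)
    (hy : 0 ≤ y) : min (s * x) (t * y) ≤ (s + t) * (x + y) / 4 := by
  have key : (s + t) * min (s * x) (t * y) ≤ (s + t) * ((s + t) * (x + y) / 4) :=
    calc (s + t) * min (s * x) (t * y)
        ≤ s * (t * y) + t * (s * x) := by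
          rw [add_mul]; gcongr <;> [exact min_le_right _ _; exact min_le_left _ _]
      _ ≤ (s + t) * ((s + t) * (x + y) / 4) := by
          nlinarith [mul_nonneg (sq_nonneg (s - t)) (add_nonneg hx hy)]
  rcases (add_nonneg hs ht).eq_or_lt with h | h
  · obtain ⟨rfl, rfl⟩ : s = 0 ∧ t = 0 := by constructor <;> linarith
    simp
  · exact le_of_mul_le_mul_left key h

lemma four_mul_sum_range_min_le (m : ℕ) : 4 * ∑ k ∈ range (m + 1), min k (m - k) ≤ m ^ 2 := by
  induction m using Nat.strong_induction_on with
  | _ m ih =>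
  match m with
  | 0 => simp
  | 1 => simp [sum_range_succ]
  | m + 2 =>
    have hshift : ∑ k ∈ range (m + 3), min k (m + 2 - k)
        = ∑ k ∈ range (m + 1), min k (m - k) + (m + 1) := by
      have hstep : ∀ k ∈ range (m + 1), min (k + 1) (m + 2 - (k + 1)) = min k (m - k) + 1 :=
        fun k hk => by simp only [mem_range] at hk; omega
      rw [sum_range_succ', sum_range_succ, sum_congr rfl hstep, sum_add_distrib]
      simp
    have := ih m (by omega)
    rw [hshift]
    nlinarith

lemma sum_range_min_mul_le {s t : ℝ} (hs : 0 ≤ s) (ht : 0 ≤ t) (m : ℕ) :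
    ∑ k ∈ range (m + 1), min (s * k) (t * (m - k)) ≤ (s + t) * m ^ 2 / 8 := by
  set f : ℕ → ℝ := fun k => min (s * k) (t * (m - k))
  have hpair : ∀ k ∈ range (m + 1), f k + f (m - k) ≤ (s + t) * ((min k (m - k) : ℕ) : ℝ) := by
    intro k hk
    have hkm : k ≤ m := Nat.lt_succ_iff.mp (mem_range.mp hk)
    simp only [f, Nat.cast_sub hkm, Nat.cast_min, sub_sub_cancel]
    rcases le_total (k : ℝ) (m - k) with h | h
    · rw [min_eq_left h]
      linarith [min_le_left (s * k) (t * (m - k)), min_le_right (s * (m - k)) (t * k)]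
    · rw [min_eq_right h]
      linarith [min_le_right (s * k) (t * (m - k)), min_le_left (s * (m - k)) (t * k)]
  have hmin : 4 * ((∑ k ∈ range (m + 1), min k (m - k) : ℕ) : ℝ) ≤ (m : ℝ) ^ 2 := by
    exact_mod_cast four_mul_sum_range_min_le m
  have hreflect : ∑ k ∈ range (m + 1), f (m - k) = ∑ k ∈ range (m + 1), f k := by
    simpa using sum_range_reflect f (m + 1)
  calc ∑ k ∈ range (m + 1), f k
      = (∑ k ∈ range (m + 1), (f k + f (m - k))) / 2 := by
        rw [sum_add_distrib, hreflect]; ring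
    _ ≤ (∑ k ∈ range (m + 1), (s + t) * ((min k (m - k) : ℕ) : ℝ)) / 2 := by
        gcongr with k hk; exact hpair k hk
    _ ≤ (s + t) * m ^ 2 / 8 := by
        rw [← mul_sum, ← Nat.cast_sum]
        nlinarith [mul_nonneg (add_nonneg hs ht) m.cast_nonneg]

def skipIndex (r k : ℕ) : ℕ := if k < r then k else k + 1

lemma sum_range_succ_eq_add_sum_skipIndex {M : Type*} [AddCommMonoid M] (f : ℕ → M) {m r : ℕ}
    (hr : r ≤ m) :
    ∑ k ∈ range (m + 1), f k = f r + ∑ k ∈ range m, f (skipIndex r k) := by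
  rw [← Fin.sum_univ_eq_sum_range, Fin.sum_univ_succAbove _ (⟨r, by omega⟩ : Fin (m + 1)),
    ← Fin.sum_univ_eq_sum_range (fun k => f (skipIndex r k))]
  congr 1
  refine sum_congr rfl fun i _ => ?_
  by_cases h : (i : ℕ) < r <;> simp [Fin.succAbove, Fin.lt_def, skipIndex, h]

def BoundedIncrements (s t : ℝ) (m : ℕ) (e : ℕ → ℝ) : Prop :=
  ∀ k < m, e (k + 1) - e k ∈ Set.Icc (-t) s

namespace BoundedIncrements

variable {s t : ℝ} {m : ℕ} {e : ℕ → ℝ}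

lemma neg (he : BoundedIncrements s t m e) : BoundedIncrements t s m (-e) := fun k hk => by
  obtain ⟨h₁, h₂⟩ := he k hk
  simp only [Pi.neg_apply, Set.mem_Icc]
  constructor <;> linarith

lemma sub_mem_Icc (he : BoundedIncrements s t m e) {a b : ℕ} (hab : a ≤ b) (hbm : b ≤ m) :
    e b - e a ∈ Set.Icc (-(t * (b - a))) (s * (b - a)) := by
  induction b, hab using Nat.le_induction with
  | base => simp
  | succ b hab ih =>
    obtain ⟨h₁, h₂⟩ := ih (by omega)
    obtain ⟨h₃, h₄⟩ := he b (by omega)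
    push_cast
    constructor <;> linarith

lemma sub_le (he : BoundedIncrements s t m e) (hs : 0 ≤ s) (ht : 0 ≤ t) (h0 : e 0 = 0)
    (hm : e m = 0) {a b : ℕ} (ha : a ≤ m) (hb : b ≤ m) : e a - e b ≤ (s + t) * m / 4 := by
  rcases le_total a b with hab | hba
  · obtain ⟨h₁, -⟩ := he.sub_mem_Icc hab hb
    obtain ⟨-, h₂⟩ := he.sub_mem_Icc (Nat.zero_le a) ha
    obtain ⟨-, h₃⟩ := he.sub_mem_Icc hb le_rfl
    simp only [h0, hm, Nat.cast_zero, sub_zero, zero_sub] at h₂ h₃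
    have hab' : (a : ℝ) ≤ b := by exact_mod_cast hab
    have hbm : (b : ℝ) ≤ m := by exact_mod_cast hb
    calc e a - e b ≤ min (t * (b - a)) (s * (a + (m - b))) := le_min (by linarith) (by linarith)
      _ ≤ (t + s) * ((b - a) + (a + (m - b))) / 4 :=
        min_mul_le_add_mul_add_div_four ht hs (by linarith) (by positivity)
      _ = (s + t) * m / 4 := by ring
  · obtain ⟨-, h₁⟩ := he.sub_mem_Icc hba ha
    obtain ⟨h₂, -⟩ := he.sub_mem_Icc ha le_rfl
    obtain ⟨h₃, -⟩ := he.sub_mem_Icc (Nat.zero_le b) hb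
    simp only [h0, hm, Nat.cast_zero, sub_zero, zero_sub] at h₂ h₃
    have hba' : (b : ℝ) ≤ a := by exact_mod_cast hba
    have ham : (a : ℝ) ≤ m := by exact_mod_cast ha
    calc e a - e b ≤ min (s * (a - b)) (t * ((m - a) + b)) := le_min (by linarith) (by linarith)
      _ ≤ (s + t) * ((a - b) + ((m - a) + b)) / 4 :=
        min_mul_le_add_mul_add_div_four hs ht (by linarith) (by positivity)
      _ = (s + t) * m / 4 := by ring

lemma sum_abs_le_of_nonneg (he : BoundedIncrements s t m e) (hs : 0 ≤ s) (ht : 0 ≤ t)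
    (h0 : e 0 = 0) (hm : e m = 0) (hnn : ∀ k ≤ m, 0 ≤ e k) :
    ∑ k ∈ range (m + 1), |e k| ≤ (s + t) * m ^ 2 / 8 := by
  refine le_trans (sum_le_sum fun k hk => ?_) (sum_range_min_mul_le hs ht m)
  have hk : k ≤ m := Nat.lt_succ_iff.mp (mem_range.mp hk)
  obtain ⟨-, hrise⟩ := he.sub_mem_Icc (Nat.zero_le k) hk
  obtain ⟨hfall, -⟩ := he.sub_mem_Icc hk le_rfl
  rw [abs_of_nonneg (hnn k hk)]
  simp only [h0, hm, CharP.cast_eq_zero, sub_zero, zero_sub] at hrise hfall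
  exact le_min hrise (by linarith)

lemma succ_sub_pred_mem_Icc_of_max (he : BoundedIncrements s t m e) {r : ℕ} (hr : 0 < r)
    (hrm : r < m) (hmax : ∀ k ≤ m, e k ≤ e r) : e (r + 1) - e (r - 1) ∈ Set.Icc (-t) s := by
  obtain ⟨h₁, -⟩ := he r hrm
  obtain ⟨-, h₂⟩ := he (r - 1) (by omega)
  rw [Nat.sub_add_cancel hr] at h₂
  have := hmax (r + 1) hrm
  have := hmax (r - 1) (by omega)
  constructor <;> linarith

lemma comp_skipIndex (he : BoundedIncrements s t (m + 1) e) {r : ℕ} (hr : 0 < r)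
    (hskip : e (r + 1) - e (r - 1) ∈ Set.Icc (-t) s) :
    BoundedIncrements s t m (e ∘ skipIndex r) := by
  intro k hk
  simp only [Function.comp, skipIndex]
  rcases lt_trichotomy (k + 1) r with h | h | h
  · rw [if_pos h, if_pos (by omega)]; exact he k (by omega)
  · rw [if_neg h.not_lt, if_pos (by omega)]
    subst h
    simpa only [Nat.add_sub_cancel] using hskip
  · rw [if_neg (by omega), if_neg (by omega)]; exact he (k + 1) (by omega)

lemma exists_small_removable_of_sign_change (he : BoundedIncrements s t m e) (hs : 0 ≤ s)
    (ht : 0 ≤ t) (h0 : e 0 = 0) (hm : e m = 0) {i j : ℕ} (hi : i ≤ m) (hj : j ≤ m) (hei : e i < 0)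
    (hej : 0 < e j) :
    ∃ r, 0 < r ∧ r < m ∧ |e r| ≤ (s + t) * m / 8 ∧ e (r + 1) - e (r - 1) ∈ Set.Icc (-t) s := by
  obtain ⟨p, hp, hpmax⟩ := exists_max_image (range (m + 1)) e nonempty_range_add_one
  obtain ⟨q, hq, hqmin⟩ := exists_min_image (range (m + 1)) e nonempty_range_add_one
  simp only [mem_range, Nat.lt_succ_iff] at hp hq hpmax hqmin
  have hep : 0 < e p := hej.trans_le (hpmax j hj)
  have heq : e q < 0 := (hqmin i hi).trans_lt hei
  have hosc := he.sub_le hs ht h0 hm hp hq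
  have interior : ∀ r ≤ m, e r ≠ 0 → 0 < r ∧ r < m := fun r hr her =>
    ⟨Nat.pos_of_ne_zero (by rintro rfl; exact her h0),
      lt_of_le_of_ne hr (by rintro rfl; exact her hm)⟩
  rcases le_total (e p) (-e q) with h | h
  · obtain ⟨hp0, hpm⟩ := interior p hp hep.ne'
    exact ⟨p, hp0, hpm, by rw [abs_of_pos hep]; linarith,
      he.succ_sub_pred_mem_Icc_of_max hp0 hpm hpmax⟩
  · obtain ⟨hq0, hqm⟩ := interior q hq heq.ne
    refine ⟨q, hq0, hqm, by rw [abs_of_neg heq]; linarith, ?_⟩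
    obtain ⟨h₁, h₂⟩ :=
      he.neg.succ_sub_pred_mem_Icc_of_max hq0 hqm fun k hk => neg_le_neg (hqmin k hk)
    simp only [Pi.neg_apply] at h₁ h₂
    constructor <;> linarith

theorem sum_abs_le (he : BoundedIncrements s t m e) (hs : 0 ≤ s) (ht : 0 ≤ t) (h0 : e 0 = 0)
    (hm : e m = 0) : ∑ k ∈ range (m + 1), |e k| ≤ (s + t) * m ^ 2 / 8 := by
  induction m generalizing e with
  | zero => simp [h0]
  | succ m ih =>
    by_cases hnn : ∀ k ≤ m + 1, 0 ≤ e k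
    · exact he.sum_abs_le_of_nonneg hs ht h0 hm hnn
    by_cases hnp : ∀ k ≤ m + 1, e k ≤ 0
    · have := he.neg.sum_abs_le_of_nonneg ht hs (by simp [h0]) (by simp [hm])
        fun k hk => neg_nonneg.mpr (hnp k hk)
      simpa only [Pi.neg_apply, abs_neg, add_comm t] using this
    push Not at hnn hnp
    obtain ⟨i, hi, hei⟩ := hnn
    obtain ⟨j, hj, hej⟩ := hnp
    obtain ⟨r, hr0, hrm, hsmall, hskip⟩ :=
      he.exists_small_removable_of_sign_change hs ht h0 hm hi hj hei hej
    have hrest := ih (he.comp_skipIndex hr0 hskip) (by simp [skipIndex, hr0, h0])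
      (by simp [skipIndex, show ¬ m < r by omega, hm])
    rw [sum_range_succ_eq_add_sum_skipIndex _ hrm.le]
    simp only [Function.comp] at hrest
    push_cast at hsmall ⊢
    nlinarith [mul_nonneg (add_nonneg hs ht) m.cast_nonneg]

end BoundedIncrements

lemma abs_sum_mul_le_of_sum_eq_zero {x b : ℕ → ℝ} {s t L : ℝ} {m : ℕ} (hs : 0 ≤ s) (ht : 0 ≤ t)
    (hx : ∀ i < m, x i ∈ Set.Icc (-t) s) (hsum : ∑ i ∈ range m, x i = 0)
    (hb : ∀ i, |b (i + 1) - b i| ≤ L) :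
    |∑ i ∈ range m, x i * b i| ≤ L * ((s + t) * m ^ 2 / 8) := by
  set E : ℕ → ℝ := fun k => ∑ i ∈ range k, x i
  have hE : BoundedIncrements s t m E := fun k hk => by simpa [E, sum_range_succ] using hx k hk
  have hpath := hE.sum_abs_le hs ht (by simp [E]) hsum
  have hL : 0 ≤ L := (abs_nonneg _).trans (hb 0)
  have hparts :
      ∑ i ∈ range m, x i * b i = -∑ i ∈ range (m - 1), (b (i + 1) - b i) * E (i + 1) := by
    simpa [mul_comm, E, hsum] using sum_range_by_parts b x m
  calc |∑ i ∈ range m, x i * b i|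
      ≤ ∑ i ∈ range (m - 1), L * |E (i + 1)| := by
        rw [hparts, abs_neg]
        refine (abs_sum_le_sum_abs _ _).trans (sum_le_sum fun i _ => ?_)
        rw [abs_mul]
        exact mul_le_mul_of_nonneg_right (hb i) (abs_nonneg _)
    _ ≤ L * ∑ k ∈ range (m + 1), |E k| := by
        rw [← mul_sum, sum_range_succ']
        gcongr
        exact le_add_of_le_of_nonneg
          (sum_le_sum_of_subset_of_nonneg (range_subset_range.mpr (by omega))
            fun _ _ _ => abs_nonneg _) (abs_nonneg _)
    _ ≤ L * ((s + t) * m ^ 2 / 8) := by gcongr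

lemma one_div_card_mul_sum_mem_Icc {ι : Type*} {s : Finset ι} (hs : s.Nonempty) {c : ι → ℝ}
    {a b : ℝ} (hc : ∀ i ∈ s, c i ∈ Set.Icc a b) : 1 / (#s : ℝ) * ∑ i ∈ s, c i ∈ Set.Icc a b := by
  have hcard : (0 : ℝ) < #s := by exact_mod_cast hs.card_pos
  have hlo := card_nsmul_le_sum s c a fun i hi => (hc i hi).1
  have hhi := sum_le_card_nsmul s c b fun i hi => (hc i hi).2
  rw [nsmul_eq_mul] at hlo hhi
  rw [one_div, Set.mem_Icc, le_inv_mul_iff₀ hcard, inv_mul_le_iff₀ hcard]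
  exact ⟨by linarith, by linarith⟩

lemma abs_sum_range_sub_mul_le {c b : ℕ → ℝ} {M G L θ : ℝ} {m : ℕ}
    (hc : ∀ i < m, c i ∈ Set.Icc 0 M) (hbG : ∀ i < m, |b i| ≤ G)
    (hb : ∀ i, |b (i + 1) - b i| ≤ L) :
    |∑ i ∈ range m, (c i - θ) * b i| ≤
      m * G * |1 / (m : ℝ) * ∑ i ∈ range m, c i - θ| + L * (M * m ^ 2 / 8) := by
  rcases Nat.eq_zero_or_pos m with rfl | hm
  · simp
  set avg := 1 / (m : ℝ) * ∑ i ∈ range m, c i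
  obtain ⟨havg0, havgM⟩ : avg ∈ Set.Icc 0 M := by
    simpa only [card_range] using one_div_card_mul_sum_mem_Icc (nonempty_range_iff.mpr hm.ne')
      fun i hi => hc i (mem_range.mp hi)
  have hsum : ∑ i ∈ range m, c i = m * avg := by
    have : (m : ℝ) ≠ 0 := by exact_mod_cast hm.ne'
    simp only [avg]; field_simp
  have hcentered := abs_sum_mul_le_of_sum_eq_zero (x := fun i => c i - avg) (b := b)
    (sub_nonneg.mpr havgM) havg0
    (fun i hi => ⟨by linarith [(hc i hi).1], by linarith [(hc i hi).2]⟩)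
    (by simp [sum_sub_distrib, hsum]) hb
  rw [sub_add_cancel] at hcentered
  have hmean : |∑ i ∈ range m, b i| ≤ m * G := by
    simpa using (abs_sum_le_sum_abs _ _).trans (sum_le_sum fun i hi => hbG i (mem_range.mp hi))
  have hsplit : ∑ i ∈ range m, (c i - θ) * b i
      = ∑ i ∈ range m, (c i - avg) * b i + (avg - θ) * ∑ i ∈ range m, b i := by
    rw [mul_sum, ← sum_add_distrib]; exact sum_congr rfl fun i _ => by ring
  calc |∑ i ∈ range m, (c i - θ) * b i|
      ≤ |∑ i ∈ range m, (c i - avg) * b i| + |avg - θ| * |∑ i ∈ range m, b i| := by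
        rw [hsplit, ← abs_mul]; exact abs_add_le _ _
    _ ≤ L * (M * m ^ 2 / 8) + |avg - θ| * (m * G) := by gcongr
    _ = m * G * |avg - θ| + L * (M * m ^ 2 / 8) := by ring

section Blocks

lemma sum_Ioc_mul_eq_sum_blocks (F : ℕ → ℝ) (m : ℕ) {a b : ℕ} (hab : a ≤ b) :
    ∑ i ∈ Ioc (a * m) (b * m), F i = ∑ j ∈ Ico a b, ∑ i ∈ Icc 1 m, F (j * m + i) := by
  induction b, hab using Nat.le_induction with
  | base => simp
  | succ b hab ih =>
    rw [← sum_Ioc_consecutive _ (Nat.mul_le_mul_right m hab)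
        (Nat.mul_le_mul_right m (Nat.le_add_right b 1)),
      ih, sum_Ico_succ_top hab, add_mul, one_mul, ← Icc_add_one_left_eq_Ioc, ← map_add_left_Icc,
      sum_map]
    rfl

variable {F : ℕ → ℝ} {m : ℕ}

lemma abs_sum_Ioc_le_of_le_add {A : ℝ} (hA : ∀ i, 0 < i → |F i| ≤ A) {u v : ℕ}
    (hv : v ≤ u + m) : |∑ i ∈ Ioc u v, F i| ≤ m * A := by
  have hA0 : 0 ≤ A := (abs_nonneg _).trans (hA 1 one_pos)
  calc |∑ i ∈ Ioc u v, F i| ≤ ∑ i ∈ Ioc u v, |F i| := abs_sum_le_sum_abs _ _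
    _ ≤ #(Ioc u v) • A := sum_le_card_nsmul _ _ _ fun i hi => hA i (by simp at hi; omega)
    _ ≤ m * A := by
        rw [Nat.card_Ioc, nsmul_eq_mul]
        gcongr
        exact_mod_cast (by omega : v - u ≤ m)

lemma abs_sum_Ioc_le_of_blocks (hm : 0 < m) {A B : ℝ} (hA : ∀ i, 0 < i → |F i| ≤ A) (hB : 0 ≤ B)
    (hblock : ∀ j, |∑ i ∈ Icc 1 m, F (j * m + i)| ≤ m * B) (l n : ℕ) :
    |∑ i ∈ Ioc l n, F i| ≤ 2 * m * A + n * B := by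
  have hA0 : 0 ≤ A := (abs_nonneg _).trans (hA 1 one_pos)
  have hl := Nat.lt_div_mul_add (a := l) hm
  have hn := Nat.lt_div_mul_add (a := n) hm
  have hl' := Nat.div_mul_le_self l m
  have hn' := Nat.div_mul_le_self n m
  by_cases hlast : l / m + 1 ≤ n / m
  · have hhead :=
      abs_sum_Ioc_le_of_le_add hA (m := m) (u := l) (v := (l / m + 1) * m) (by nlinarith)
    have htail := abs_sum_Ioc_le_of_le_add hA (u := n / m * m) (v := n) hn.le
    have hmid : |∑ i ∈ Ioc ((l / m + 1) * m) (n / m * m), F i| ≤ n * B :=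
      calc _ ≤ ∑ j ∈ Ico (l / m + 1) (n / m), |∑ i ∈ Icc 1 m, F (j * m + i)| := by
            rw [sum_Ioc_mul_eq_sum_blocks F m hlast]; exact abs_sum_le_sum_abs _ _
        _ ≤ ∑ j ∈ Ico (l / m + 1) (n / m), m * B := sum_le_sum fun j _ => hblock j
        _ ≤ n * B := by
            rw [sum_const, Nat.card_Ico, nsmul_eq_mul, ← mul_assoc]
            gcongr
            exact_mod_cast (Nat.mul_le_mul_right m (Nat.sub_le _ _)).trans hn'
    have hq : l ≤ (l / m + 1) * m := by nlinarith
    have hQ : (l / m + 1) * m ≤ n / m * m := Nat.mul_le_mul_right m hlast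
    rw [← sum_Ioc_consecutive _ (hq.trans hQ) hn', ← sum_Ioc_consecutive _ hq hQ]
    linarith [abs_add_three (∑ i ∈ Ioc l ((l / m + 1) * m), F i)
      (∑ i ∈ Ioc ((l / m + 1) * m) (n / m * m), F i) (∑ i ∈ Ioc (n / m * m) n, F i)]
  · have := abs_sum_Ioc_le_of_le_add hA (m := m) (u := l) (v := n) (by nlinarith)
    nlinarith [mul_nonneg n.cast_nonneg hB, mul_nonneg m.cast_nonneg hA0]

end Blocks

theorem abs_sum_sub_mul_le_of_block_averages {c b : ℕ → ℝ} {θ M G L δ : ℝ} {m : ℕ} (hm : 0 < m)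
    (hθ : 0 ≤ θ) (hc : ∀ i, 0 < i → c i ∈ Set.Icc 0 M) (hbG : ∀ i, |b i| ≤ G)
    (hb : ∀ i, |b (i + 1) - b i| ≤ L)
    (hδ : ∀ j, |1 / (m : ℝ) * ∑ i ∈ Icc 1 m, c (j * m + i) - θ| ≤ δ) (l n : ℕ) :
    |∑ i ∈ Ioc l n, (c i - θ) * b i| ≤ 2 * m * (max θ M * G) + n * (G * δ + L * M * m / 8) := by
  have hIcc : ∀ f : ℕ → ℝ, ∑ i ∈ Icc 1 m, f i = ∑ i ∈ range m, f (i + 1) := fun f => by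
    rw [range_eq_Ico, sum_Ico_add' f 0 m 1]; rfl
  have hG : 0 ≤ G := (abs_nonneg _).trans (hbG 0)
  have hM : 0 ≤ M := (hc 1 one_pos).1.trans (hc 1 one_pos).2
  have hL : 0 ≤ L := (abs_nonneg _).trans (hb 0)
  have hδ0 : 0 ≤ δ := (abs_nonneg _).trans (hδ 0)
  refine abs_sum_Ioc_le_of_blocks hm (fun i hi => ?_) (by positivity) (fun j => ?_) l n
  · obtain ⟨hc0, hcM⟩ := hc i hi
    rw [abs_mul]
    refine mul_le_mul ?_ (hbG i) (abs_nonneg _) (hθ.trans (le_max_left _ _))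
    rw [abs_sub_le_iff]
    constructor <;> linarith [le_max_left θ M, le_max_right θ M]
  · have hblock := abs_sum_range_sub_mul_le (θ := θ) (m := m) (c := fun i => c (j * m + (i + 1)))
      (b := fun i => b (j * m + (i + 1))) (fun i _ => hc _ (by omega)) (fun i _ => hbG _)
      (fun i => hb _)
    have hδj := hδ j
    rw [hIcc] at hδj ⊢
    calc _ ≤ _ := hblock
      _ ≤ m * G * δ + L * (M * m ^ 2 / 8) := by gcongr
      _ = m * (G * δ + L * M * m / 8) := by ring

lemma abs_integral_add_succ_sub_le_dTV {Ω : Type*} [MeasurableSpace Ω] (P : Measure Ω)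
    [IsProbabilityMeasure P] {T : Ω → ℕ} (hT : Measurable T) {g : ℕ → ℝ} {G : ℝ}
    (hG : ∀ x, |g x| ≤ G) (i : ℕ) :
    |∫ ω, g (T ω + (i + 1)) ∂P - ∫ ω, g (T ω + i) ∂P| ≤
      2 * G * dTV (P.map T) (P.map fun ω => T ω + 1) := by
  have hT1 : Measurable fun ω => T ω + 1 := Measurable.of_discrete.comp hT
  have := Measure.isProbabilityMeasure_map (μ := P) hT.aemeasurable
  have := Measure.isProbabilityMeasure_map (μ := P) hT1.aemeasurable
  have hshift : ∫ ω, g (T ω + (i + 1)) ∂P = ∫ x, g (x + i) ∂(P.map fun ω => T ω + 1) := by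
    rw [integral_map hT1.aemeasurable Measurable.of_discrete.aestronglyMeasurable]
    simp only [add_right_comm, add_assoc]
  rw [hshift, ← integral_map (f := fun x => g (x + i)) hT.aemeasurable
    Measurable.of_discrete.aestronglyMeasurable, abs_sub_comm]
  exact abs_integral_sub_integral_le_dTV _ _ Measurable.of_discrete fun x => hG (x + i)

theorem stmt5_general {Ω : Type*} [MeasurableSpace Ω] (P : Measure Ω) [IsProbabilityMeasure P]
    (T : Ω → ℕ) (hT : Measurable T)
    (θ : ℝ) (hθ : 0 < θ) (θi : ℕ → ℝ) (hnn : ∀ i, 0 ≤ θi i)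
    (hbdd : BddAbove (Set.range fun i => θi (i + 1)))
    (g : ℕ → ℝ) (hg : BddAbove (Set.range fun x => |g x|))
    (l n m : ℕ) (hm : 1 ≤ m) :
    |∑ i ∈ Icc (l + 1) n, (θi i - θ) * ∫ ω, g (T ω + i) ∂P| ≤
      (⨆ x, |g x|) *
        (2 * max θ (⨆ i, θi (i + 1)) * m +
          n * (⨆ j : ℕ, |(1 / (m : ℝ)) * ∑ i ∈ Icc 1 m, θi (j * m + i) - θ|) +
          (1 / 4) * (⨆ i, θi (i + 1)) * m * n *
            dTV (Measure.map T P) (Measure.map (fun ω => T ω + 1) P)) := by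
  set θs := ⨆ i, θi (i + 1)
  have hθs : ∀ i, 0 < i → θi i ∈ Set.Icc 0 θs := fun i hi =>
    ⟨hnn i, by simpa [Nat.sub_add_cancel hi] using le_ciSup hbdd (i - 1)⟩
  have hδ : ∀ j : ℕ, |1 / (m : ℝ) * ∑ i ∈ Icc 1 m, θi (j * m + i) - θ| ≤
      ⨆ j : ℕ, |(1 / (m : ℝ)) * ∑ i ∈ Icc 1 m, θi (j * m + i) - θ| := by
    refine le_ciSup ⟨θs + θ, ?_⟩
    rintro _ ⟨j, rfl⟩
    obtain ⟨h₀, h₁⟩ := one_div_card_mul_sum_mem_Icc (s := Icc 1 m) ⟨1, by simp; omega⟩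
      fun i hi => hθs (j * m + i) (by simp at hi; omega)
    simp only [Nat.card_Icc, add_tsub_cancel_right] at h₀ h₁
    rw [abs_sub_le_iff]
    constructor <;> linarith
  have hGb : ∀ x, |g x| ≤ ⨆ x, |g x| := le_ciSup hg
  have hbG : ∀ i, |∫ ω, g (T ω + i) ∂P| ≤ ⨆ x, |g x| := fun i => by
    simpa using norm_integral_le_of_norm_le_const (μ := P) (f := fun ω => g (T ω + i))
      (Filter.Eventually.of_forall fun ω => hGb _)
  rw [Icc_add_one_left_eq_Ioc]
  refine (abs_sum_sub_mul_le_of_block_averages hm hθ.le hθs hbG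
    (abs_integral_add_succ_sub_le_dTV P hT hGb) hδ l n).trans_eq ?_
  ring

/-- Lemma 5.2 (i): for bounded `g`,
`|∑_{i=l+1}^n (θᵢ−θ) E g(T+i)| ≤ ‖g‖ (2θ*'m + nδ(m,θ) + (1/4)θ_* m n d_TV(L(T),L(T+1)))`. -/
theorem stmt5 {Ω : Type*} [MeasurableSpace Ω] (P : Measure Ω) [IsProbabilityMeasure P]
    (T : Ω → ℕ) (hT : Measurable T)
    (θ : ℝ) (hθ : 0 < θ) (θi : ℕ → ℝ) (hnn : ∀ i, 0 ≤ θi i)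
    (hbdd : BddAbove (Set.range fun i => θi (i + 1)))
    (g : ℕ → ℝ) (hg : BddAbove (Set.range fun x => |g x|))
    (l n m : ℕ) (hln : l < n) (hm : 1 ≤ m) :
    |∑ i ∈ Icc (l + 1) n, (θi i - θ) * ∫ ω, g (T ω + i) ∂P| ≤
      (⨆ x, |g x|) *
        (2 * max θ (⨆ i, θi (i + 1)) * m +
          n * (⨆ j : ℕ, |(1 / (m : ℝ)) * ∑ i ∈ Icc 1 m, θi (j * m + i) - θ|) +
          (1 / 4) * (⨆ i, θi (i + 1)) * m * n *
            dTV (Measure.map T P) (Measure.map (fun ω => T ω + 1) P)) :=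
  stmt5_general P T hT θ hθ θi hnn hbdd g hg l n m hm
end

section
/- Let θ > 0, let (θ_i)_{i≥1} be a non-negative real sequence with θ_* := sup_i θ_i < ∞, and for m ∈ ℕ set δ(m,θ) := sup_{j≥0} | (1/m)·∑_{i=1}^m θ_{jm+i} − θ |. If 0 < 2m ≤ l ≤ n, then exp( |∑_{i=l+1}^n (θ_i − θ)/i| ) ≤ exp(2m(1+θ_*)/l)·(n/l)^{δ(m,θ)} ≤ e^{1+θ_*}·(n/l)^{δ(m,θ)}. -/
/-!
Write `a i = θᵢ - θ`. Every block `(jm, jm + m]` has `|∑ a| ≤ m δ`, and single terms obey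
`|aᵢ| ≤ δ + θ_*`, so cutting `(l, k]` into whole blocks and two short end pieces gives
`|∑_{i=l+1}^k aᵢ| ≤ δ (k - l) + 2 m θ_*`. Summation by parts against the decreasing weights
`1/i` turns this into `|∑_{i=l+1}^n aᵢ / i| ≤ δ ∑_{i=l+1}^n 1/i + 2 m θ_* / (l + 1)`, and the
harmonic sum is at most `log (n / l)`.
-/

open Finset

section SummationByParts

variable {R : Type*} [CommRing R]

theorem sum_Ioc_mul_eq_sum_partialSum_mul_sub (g w : ℕ → R) {l n : ℕ} (hln : l ≤ n) :
    ∑ i ∈ Ioc l n, g i * w i =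
      ∑ i ∈ Ioc l n, (∑ j ∈ Ioc l i, g j) * (w i - w (i + 1)) +
        (∑ j ∈ Ioc l n, g j) * w (n + 1) := by
  induction n, hln using Nat.le_induction with
  | base => simp
  | succ n hln ih =>
    simp only [sum_Ioc_succ_top hln, ih]
    ring

/-- Summation by parts for the sequence whose partial sums over `(l, i]` are `d (i - l) + c`. -/
theorem sum_Ioc_affine_mul_sub (w : ℕ → R) (d c : R) {l n : ℕ} (hln : l ≤ n) :
    ∑ i ∈ Ioc l n, (d * ((i : R) - l) + c) * (w i - w (i + 1)) +
        (d * ((n : R) - l) + c) * w (n + 1) =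
      d * ∑ i ∈ Ioc l n, w i + c * w (l + 1) := by
  induction n, hln using Nat.le_induction with
  | base => simp
  | succ n hln ih =>
    rw [sum_Ioc_succ_top hln, sum_Ioc_succ_top hln]
    push_cast
    linear_combination ih

end SummationByParts

theorem abs_sum_Ioc_mul_le_of_partialSum_le {g w : ℕ → ℝ} {l n : ℕ} {d c : ℝ} (hln : l ≤ n)
    (hw_anti : ∀ i ∈ Ioc l n, w (i + 1) ≤ w i) (hw_nonneg : 0 ≤ w (n + 1))
    (hg : ∀ k, l ≤ k → |∑ i ∈ Ioc l k, g i| ≤ d * ((k : ℝ) - l) + c) :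
    |∑ i ∈ Ioc l n, g i * w i| ≤ d * ∑ i ∈ Ioc l n, w i + c * w (l + 1) := by
  rw [sum_Ioc_mul_eq_sum_partialSum_mul_sub g w hln, ← sum_Ioc_affine_mul_sub w d c hln]
  refine (abs_add_le _ _).trans (add_le_add ?_ ?_)
  · refine (abs_sum_le_sum_abs _ _).trans (sum_le_sum fun i hi => ?_)
    have hdiff : 0 ≤ w i - w (i + 1) := sub_nonneg.2 (hw_anti i hi)
    rw [abs_mul, abs_of_nonneg hdiff]
    exact mul_le_mul_of_nonneg_right (hg i (mem_Ioc.1 hi).1.le) hdiff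
  · rw [abs_mul, abs_of_nonneg hw_nonneg]
    exact mul_le_mul_of_nonneg_right (hg n hln) hw_nonneg

theorem sum_Ioc_inv_le_log_div {l n : ℕ} (hl : 0 < l) (hln : l ≤ n) :
    ∑ i ∈ Ioc l n, (i : ℝ)⁻¹ ≤ Real.log (n / l) := by
  have hl' : (0 : ℝ) < l := by exact_mod_cast hl
  calc ∑ i ∈ Ioc l n, (i : ℝ)⁻¹ = ∑ i ∈ Ico l n, ((i + 1 : ℕ) : ℝ)⁻¹ := by
        rw [← Ico_add_one_add_one_eq_Ioc, ← sum_Ico_add' (fun i : ℕ => (i : ℝ)⁻¹)]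
    _ ≤ ∫ x in (l : ℝ)..n, x⁻¹ := (inv_antitoneOn_Icc_right hl').sum_le_integral_Ico hln
    _ = Real.log (n / l) := integral_inv <| by
          rw [Set.uIcc_of_le (by exact_mod_cast hln)]
          exact fun h => hl'.not_ge h.1

theorem abs_sum_Ioc_le_of_abs_le_s7 {f : ℕ → ℝ} {u v : ℕ} {A : ℝ} (huv : u ≤ v)
    (hf : ∀ i ∈ Ioc u v, |f i| ≤ A) : |∑ i ∈ Ioc u v, f i| ≤ ((v : ℝ) - u) * A :=
  calc |∑ i ∈ Ioc u v, f i| ≤ ∑ i ∈ Ioc u v, |f i| := abs_sum_le_sum_abs _ _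
    _ ≤ #(Ioc u v) • A := sum_le_card_nsmul _ _ _ hf
    _ = ((v : ℝ) - u) * A := by rw [Nat.card_Ioc, nsmul_eq_mul, Nat.cast_sub huv]

section Blocks

variable {f : ℕ → ℝ} {m : ℕ} {d t : ℝ}

theorem abs_sum_Ioc_blocks_le (hblock : ∀ j, |∑ i ∈ Ioc (j * m) (j * m + m), f i| ≤ m * d)
    {p q : ℕ} (hpq : p ≤ q) :
    |∑ i ∈ Ioc (p * m) (q * m), f i| ≤ d * ((q * m : ℕ) - (p * m : ℕ) : ℝ) := by
  induction q, hpq using Nat.le_induction with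
  | base => simp
  | succ q hpq ih =>
    rw [Nat.succ_mul,
      ← sum_Ioc_consecutive _ (Nat.mul_le_mul_right m hpq) (Nat.le_add_right _ m)]
    calc _ ≤ |∑ i ∈ Ioc (p * m) (q * m), f i| + |∑ i ∈ Ioc (q * m) (q * m + m), f i| :=
          abs_add_le _ _
      _ ≤ d * ((q * m : ℕ) - (p * m : ℕ) : ℝ) + m * d := add_le_add ih (hblock q)
      _ = d * ((q * m + m : ℕ) - (p * m : ℕ) : ℝ) := by push_cast; ring

variable (hm : 0 < m) (ht : 0 ≤ t) (hf : ∀ i, 0 < i → |f i| ≤ d + t)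
  (hblock : ∀ j, |∑ i ∈ Ioc (j * m) (j * m + m), f i| ≤ m * d)
include hm ht hf hblock

theorem abs_sum_Ioc_from_block_le {p v : ℕ} (hpv : p * m ≤ v) :
    |∑ i ∈ Ioc (p * m) v, f i| ≤ d * ((v : ℝ) - (p * m : ℕ)) + m * t := by
  set q := v / m
  have hpq : p ≤ q := (Nat.le_div_iff_mul_le hm).2 hpv
  have hqv : q * m ≤ v := Nat.div_mul_le_self v m
  have hvq : (v : ℝ) - (q * m : ℕ) ≤ m := by
    have : (v : ℝ) ≤ (q * m : ℕ) + m := by exact_mod_cast (Nat.lt_div_mul_add hm).le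
    linarith
  have hend := abs_sum_Ioc_le_of_abs_le_s7 hqv fun i hi => hf i (by grind)
  rw [← sum_Ioc_consecutive _ (Nat.mul_le_mul_right m hpq) hqv]
  calc _ ≤ |∑ i ∈ Ioc (p * m) (q * m), f i| + |∑ i ∈ Ioc (q * m) v, f i| := abs_add_le _ _
    _ ≤ d * ((q * m : ℕ) - (p * m : ℕ) : ℝ) + ((v : ℝ) - (q * m : ℕ)) * (d + t) :=
        add_le_add (abs_sum_Ioc_blocks_le hblock hpq) hend
    _ = d * ((v : ℝ) - (p * m : ℕ)) + ((v : ℝ) - (q * m : ℕ)) * t := by ring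
    _ ≤ d * ((v : ℝ) - (p * m : ℕ)) + m * t := by gcongr

/-- Run to the first block boundary `w` after `u`, then use whole blocks. -/
theorem abs_sum_Ioc_le_of_block {u v : ℕ} (huv : u ≤ v) :
    |∑ i ∈ Ioc u v, f i| ≤ d * ((v : ℝ) - u) + 2 * m * t := by
  set w := (u / m + 1) * m
  have hw : w = u / m * m + m := add_one_mul _ _
  have huw : u ≤ w := hw ▸ (Nat.lt_div_mul_add hm).le
  have hwu : (w : ℝ) - u ≤ m := by
    have : w ≤ u + m := hw ▸ Nat.add_le_add_right (Nat.div_mul_le_self u m) m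
    rw [sub_le_iff_le_add']; exact_mod_cast this
  rcases le_total v w with hvw | hwv
  · have hvu : (v : ℝ) - u ≤ m := by
      have : (v : ℝ) ≤ w := by exact_mod_cast hvw
      linarith
    calc _ ≤ ((v : ℝ) - u) * (d + t) := abs_sum_Ioc_le_of_abs_le_s7 huv fun i hi => hf i (by grind)
      _ = d * ((v : ℝ) - u) + ((v : ℝ) - u) * t := by ring
      _ ≤ d * ((v : ℝ) - u) + 2 * m * t := by gcongr; linarith
  · rw [← sum_Ioc_consecutive _ huw hwv]
    calc _ ≤ |∑ i ∈ Ioc u w, f i| + |∑ i ∈ Ioc w v, f i| := abs_add_le _ _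
      _ ≤ ((w : ℝ) - u) * (d + t) + (d * ((v : ℝ) - w) + m * t) :=
          add_le_add (abs_sum_Ioc_le_of_abs_le_s7 huw fun i hi => hf i (by grind))
            (abs_sum_Ioc_from_block_le hm ht hf hblock hwv)
      _ = d * ((v : ℝ) - u) + ((w : ℝ) - u) * t + m * t := by ring
      _ ≤ d * ((v : ℝ) - u) + 2 * m * t := by nlinarith

theorem abs_sum_Ioc_div_le_of_block (hd : 0 ≤ d) {l n : ℕ} (hl : 0 < l) (hln : l ≤ n) :
    |∑ i ∈ Ioc l n, f i / i| ≤ d * Real.log (n / l) + 2 * m * t / l := by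
  have hweighted := abs_sum_Ioc_mul_le_of_partialSum_le (g := f) (w := fun i => (i : ℝ)⁻¹)
    (c := 2 * m * t) hln
    (fun i hi => inv_anti₀ (Nat.cast_pos.2 (hl.trans (mem_Ioc.1 hi).1)) (by simp)) (by positivity)
    (fun k hk => abs_sum_Ioc_le_of_block hm ht hf hblock hk)
  simp only [← div_eq_mul_inv] at hweighted
  calc _ ≤ d * ∑ i ∈ Ioc l n, (i : ℝ)⁻¹ + 2 * m * t / ((l + 1 : ℕ) : ℝ) := hweighted
    _ ≤ d * Real.log (n / l) + 2 * m * t / l := by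
        gcongr
        · exact sum_Ioc_inv_le_log_div hl hln
        · simp

end Blocks

theorem sum_Icc_one_add_eq_sum_Ioc {M : Type*} [AddCommMonoid M] (a : ℕ → M) (k m : ℕ) :
    ∑ i ∈ Icc 1 m, a (k + i) = ∑ i ∈ Ioc k (k + m), a i := by
  rw [← Icc_add_one_left_eq_Ioc, ← map_add_left_Icc 1 m k, sum_map]
  rfl

section BlockMeans

variable {a : ℕ → ℝ} {m : ℕ}

theorem block_mean_le {t : ℝ} (hm : 0 < m) (hat : ∀ i, 0 < i → a i ≤ t) (k : ℕ) :
    (1 / (m : ℝ)) * ∑ i ∈ Icc 1 m, a (k + i) ≤ t := by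
  have hsum : ∑ i ∈ Icc 1 m, a (k + i) ≤ m * t := by
    simpa using sum_le_card_nsmul (Icc 1 m) _ t fun i hi => hat _ (by grind)
  rw [one_div, inv_mul_le_iff₀ (by exact_mod_cast hm)]
  exact hsum

theorem block_mean_nonneg (ha : ∀ i, 0 ≤ a i) (k : ℕ) :
    0 ≤ (1 / (m : ℝ)) * ∑ i ∈ Icc 1 m, a (k + i) :=
  mul_nonneg (by positivity) (sum_nonneg fun i _ => ha _)

theorem abs_sum_Ioc_sub_le_of_block_mean {θ d : ℝ} (hm : 0 < m) (k : ℕ)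
    (hdev : |(1 / (m : ℝ)) * ∑ i ∈ Icc 1 m, a (k + i) - θ| ≤ d) :
    |∑ i ∈ Ioc k (k + m), (a i - θ)| ≤ m * d := by
  have hm' : (0 : ℝ) < m := by exact_mod_cast hm
  have hsum : ∑ i ∈ Ioc k (k + m), (a i - θ) =
      m * ((1 / (m : ℝ)) * ∑ i ∈ Icc 1 m, a (k + i) - θ) := by
    rw [sum_sub_distrib, ← sum_Icc_one_add_eq_sum_Ioc, sum_const, Nat.card_Ioc,
      Nat.add_sub_cancel_left, nsmul_eq_mul]
    field_simp
  rw [hsum, abs_mul, abs_of_pos hm']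
  exact mul_le_mul_of_nonneg_left hdev hm'.le

end BlockMeans

theorem abs_sum_Ioc_sub_div_le {θ t d : ℝ} {θi : ℕ → ℝ} {m l n : ℕ} (hθ : 0 ≤ θ)
    (hnn : ∀ i, 0 ≤ θi i) (hθt : ∀ i, 0 < i → θi i ≤ t)
    (hdev : ∀ j : ℕ, |(1 / (m : ℝ)) * ∑ i ∈ Icc 1 m, θi (j * m + i) - θ| ≤ d)
    (hm : 0 < m) (hl : 0 < l) (hln : l ≤ n) :
    |∑ i ∈ Ioc l n, (θi i - θ) / i| ≤ d * Real.log (n / l) + 2 * m * t / l := by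
  have ht : 0 ≤ t := (hnn 1).trans (hθt 1 one_pos)
  have hd : 0 ≤ d := (abs_nonneg _).trans (hdev 0)
  have hθtd : θ ≤ t + d := by
    have := block_mean_le hm hθt (0 * m)
    linarith [(abs_le.1 (hdev 0)).1]
  have hf : ∀ i, 0 < i → |θi i - θ| ≤ d + t := fun i hi =>
    abs_le.2 ⟨by linarith [hnn i], by linarith [hθt i hi]⟩
  exact abs_sum_Ioc_div_le_of_block hm ht hf
    (fun j => abs_sum_Ioc_sub_le_of_block_mean hm (j * m) (hdev j)) hd hl hln

/-- Lemma 5.3: if `0 < 2m ≤ l ≤ n`, then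
`exp|∑_{i=l+1}^n (θᵢ−θ)/i| ≤ exp(2m(1+θ_*)/l)(n/l)^{δ(m,θ)} ≤ e^{1+θ_*}(n/l)^{δ(m,θ)}`. -/
theorem stmt7 (θ : ℝ) (hθ : 0 < θ) (θi : ℕ → ℝ) (hnn : ∀ i, 0 ≤ θi i)
    (hbdd : BddAbove (Set.range fun i => θi (i + 1)))
    (l n m : ℕ) (hm : 0 < m) (hml : 2 * m ≤ l) (hln : l ≤ n) :
    Real.exp |∑ i ∈ Icc (l + 1) n, (θi i - θ) / i| ≤
        Real.exp (2 * m * (1 + ⨆ i, θi (i + 1)) / l) *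
          ((n : ℝ) / l) ^ (⨆ j : ℕ, |(1 / (m : ℝ)) * ∑ i ∈ Icc 1 m, θi (j * m + i) - θ|) ∧
      Real.exp (2 * m * (1 + ⨆ i, θi (i + 1)) / l) *
          ((n : ℝ) / l) ^ (⨆ j : ℕ, |(1 / (m : ℝ)) * ∑ i ∈ Icc 1 m, θi (j * m + i) - θ|) ≤
        Real.exp (1 + ⨆ i, θi (i + 1)) *
          ((n : ℝ) / l) ^ (⨆ j : ℕ, |(1 / (m : ℝ)) * ∑ i ∈ Icc 1 m, θi (j * m + i) - θ|) := by
  set t := ⨆ i, θi (i + 1)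
  set d := ⨆ j : ℕ, |(1 / (m : ℝ)) * ∑ i ∈ Icc 1 m, θi (j * m + i) - θ|
  have hl : 0 < l := by omega
  have hθt : ∀ i, 0 < i → θi i ≤ t := fun i hi => by
    simpa [Nat.sub_add_cancel hi] using le_ciSup hbdd (i - 1)
  have ht : 0 ≤ t := (hnn 1).trans (hθt 1 one_pos)
  have hdev : ∀ j : ℕ, |(1 / (m : ℝ)) * ∑ i ∈ Icc 1 m, θi (j * m + i) - θ| ≤ d := by
    refine le_ciSup ⟨t + θ, Set.forall_mem_range.2 fun j => abs_le.2 ⟨?_, ?_⟩⟩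
    · linarith [block_mean_nonneg (m := m) hnn (j * m)]
    · linarith [block_mean_le hm hθt (j * m)]
  have hsum := abs_sum_Ioc_sub_div_le hθ.le hnn hθt hdev hm hl hln
  have hl' : (0 : ℝ) < l := by exact_mod_cast hl
  have hn' : (0 : ℝ) < n := by exact_mod_cast hl.trans_le hln
  rw [Icc_add_one_left_eq_Ioc]
  refine ⟨?_, ?_⟩
  · rw [Real.rpow_def_of_pos (div_pos hn' hl'), ← Real.exp_add, mul_comm (Real.log _)]
    have : 2 * m * t / l ≤ 2 * m * (1 + t) / l := by gcongr; linarith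
    gcongr
    linarith
  · gcongr
    rw [div_le_iff₀ hl']
    have : (2 * m : ℝ) ≤ l := by exact_mod_cast hml
    nlinarith
end

section
/- Let θ > 0 and n ∈ ℕ, and let Z*_1, …, Z*_n be independent random variables with Z*_i Poisson distributed with mean θ/i. Then for every integer j with 0 ≤ j ≤ n, P[∑_{i=1}^n i·Z*_i ≤ j] ≤ ∏_{i=j+1}^n P[Z*_i = 0] = exp(−∑_{i=j+1}^n θ/i) ≤ ((j+1)/(n+1))^θ. -/
/-!
An outcome with `∑ i · Z*_i ≤ j` forces `Z*_i = 0` for every `i > j`, so by independence its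
probability is at most `∏_{i>j} P[Z*_i = 0] = ∏_{i>j} exp(-θ/i)`. Comparing the harmonic sum
`∑_{i=j+1}^n 1/i` with `∫_{j+1}^{n+1} dx/x = log((n+1)/(j+1))` gives the power bound.
-/

open MeasureTheory ProbabilityTheory Finset

lemma Real.log_div_le_sum_Ico_inv {a b : ℕ} (ha : 0 < a) (hab : a ≤ b) :
    Real.log ((b : ℝ) / a) ≤ ∑ i ∈ Ico a b, (i : ℝ)⁻¹ := by
  have ha' : (0 : ℝ) < a := by exact_mod_cast ha
  calc Real.log ((b : ℝ) / a) = ∫ x in (a : ℝ)..b, x⁻¹ := by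
        rw [integral_inv]
        simp [Set.uIcc_of_le (Nat.cast_le.mpr hab), ha'.not_ge]
    _ ≤ ∑ i ∈ Ico a b, (i : ℝ)⁻¹ :=
        (inv_antitoneOn_Icc_right ha').integral_le_sum_Ico hab

lemma Real.exp_neg_sum_Icc_div_le_rpow {θ : ℝ} (hθ : 0 ≤ θ) {j n : ℕ} (hjn : j ≤ n) :
    Real.exp (-∑ i ∈ Icc (j + 1) n, θ / i) ≤ (((j : ℝ) + 1) / ((n : ℝ) + 1)) ^ θ := by
  have hlog : Real.log (((n : ℝ) + 1) / ((j : ℝ) + 1)) ≤ ∑ i ∈ Icc (j + 1) n, (i : ℝ)⁻¹ := by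
    rw [← Ico_add_one_right_eq_Icc]
    exact_mod_cast Real.log_div_le_sum_Ico_inv j.succ_pos (Nat.succ_le_succ hjn)
  have hsum : ∑ i ∈ Icc (j + 1) n, θ / i = θ * ∑ i ∈ Icc (j + 1) n, (i : ℝ)⁻¹ := by
    simp only [div_eq_mul_inv, mul_sum]
  rw [Real.rpow_def_of_pos (by positivity), Real.exp_le_exp, hsum, ← inv_div,
    Real.log_inv]
  nlinarith

lemma Nat.eq_zero_of_sum_mul_le {s : Finset ℕ} {z : ℕ → ℕ} {i j : ℕ}
    (hsum : ∑ k ∈ s, k * z k ≤ j) (hi : i ∈ s) (hji : j < i) : z i = 0 := by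
  by_contra hne
  have : i ≤ ∑ k ∈ s, k * z k :=
    (Nat.le_mul_of_pos_right i (Nat.pos_of_ne_zero hne)).trans
      (single_le_sum (f := fun k => k * z k) (fun _ _ => Nat.zero_le _) hi)
  omega

lemma ProbabilityTheory.iIndepFun.measure_sum_mul_le_le_prod {Ω : Type*} [MeasurableSpace Ω]
    {P : Measure Ω} {Z : ℕ → Ω → ℕ} (hind : iIndepFun Z P) {s t : Finset ℕ} {j : ℕ}
    (hts : t ⊆ s) (ht : ∀ i ∈ t, j < i) :
    P {ω | ∑ i ∈ s, i * Z i ω ≤ j} ≤ ∏ i ∈ t, P {ω | Z i ω = 0} := by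
  rw [← hind.meas_biInter (s := fun i => {ω | Z i ω = 0}) fun i _ => ⟨{0}, measurableSet_singleton 0, rfl⟩]
  refine measure_mono fun ω hω => Set.mem_iInter₂.mpr fun i hi => ?_
  exact Nat.eq_zero_of_sum_mul_le hω (hts hi) (ht i hi)

lemma ProbabilityTheory.measureReal_setOf_eq_zero_of_map_eq_poissonMeasure {Ω : Type*}
    [MeasurableSpace Ω] {P : Measure Ω} {X : Ω → ℕ} (hX : Measurable X) {r : NNReal}
    (hmap : P.map X = poissonMeasure r) :
    P.real {ω | X ω = 0} = Real.exp (-r) := by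
  rw [measureReal_def, show {ω | X ω = 0} = X ⁻¹' {0} from rfl,
    ← Measure.map_apply hX (measurableSet_singleton 0), hmap, poissonMeasure_singleton,
    ENNReal.toReal_ofReal (by positivity)]
  simp

theorem stmt9_general {Ω : Type*} [MeasurableSpace Ω] (P : Measure Ω) [IsProbabilityMeasure P]
    (θ : NNReal) (n : ℕ)
    (Z : ℕ → Ω → ℕ) (hZm : ∀ i, Measurable (Z i))
    (hind : iIndepFun Z P)
    (hpois : ∀ i ∈ Icc 1 n, Measure.map (Z i) P = poissonMeasure (θ / (i : NNReal)))
    (j : ℕ) (hj : j ≤ n) :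
    (P {ω | ∑ i ∈ Icc 1 n, i * Z i ω ≤ j}).toReal ≤
        ∏ i ∈ Icc (j + 1) n, (P {ω | Z i ω = 0}).toReal ∧
      ∏ i ∈ Icc (j + 1) n, (P {ω | Z i ω = 0}).toReal
        = Real.exp (-∑ i ∈ Icc (j + 1) n, (θ : ℝ) / i) ∧
      Real.exp (-∑ i ∈ Icc (j + 1) n, (θ : ℝ) / i) ≤
        (((j : ℝ) + 1) / ((n : ℝ) + 1)) ^ (θ : ℝ) := by
  have hsub : Icc (j + 1) n ⊆ Icc 1 n := Icc_subset_Icc_left (Nat.le_add_left 1 j)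
  refine ⟨?_, ?_, Real.exp_neg_sum_Icc_div_le_rpow θ.coe_nonneg hj⟩
  · rw [← ENNReal.toReal_prod]
    refine ENNReal.toReal_mono (ENNReal.prod_ne_top fun _ _ => measure_ne_top _ _) ?_
    exact hind.measure_sum_mul_le_le_prod hsub fun i hi => (mem_Icc.mp hi).1
  · rw [← sum_neg_distrib, Real.exp_sum]
    refine prod_congr rfl fun i hi => ?_
    rw [← measureReal_def,
      measureReal_setOf_eq_zero_of_map_eq_poissonMeasure (hZm i) (hpois i (hsub hi))]
    simp

/-- Display (3.13): for independent `Z*_i ~ Poisson(θ/i)`, `1 ≤ i ≤ n`, and `0 ≤ j ≤ n`,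
`P[∑ i Z*_i ≤ j] ≤ ∏_{i=j+1}^n P[Z*_i = 0] = exp(−∑_{i=j+1}^n θ/i) ≤ ((j+1)/(n+1))^θ`. -/
theorem stmt9 {Ω : Type*} [MeasurableSpace Ω] (P : Measure Ω) [IsProbabilityMeasure P]
    (θ : NNReal) (hθ : 0 < θ) (n : ℕ) (hn : 1 ≤ n)
    (Z : ℕ → Ω → ℕ) (hZm : ∀ i, Measurable (Z i))
    (hind : iIndepFun Z P)
    (hpois : ∀ i ∈ Icc 1 n, Measure.map (Z i) P = poissonMeasure (θ / (i : NNReal)))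
    (j : ℕ) (hj : j ≤ n) :
    (P {ω | ∑ i ∈ Icc 1 n, i * Z i ω ≤ j}).toReal ≤
        ∏ i ∈ Icc (j + 1) n, (P {ω | Z i ω = 0}).toReal ∧
      ∏ i ∈ Icc (j + 1) n, (P {ω | Z i ω = 0}).toReal
        = Real.exp (-∑ i ∈ Icc (j + 1) n, (θ : ℝ) / i) ∧
      Real.exp (-∑ i ∈ Icc (j + 1) n, (θ : ℝ) / i) ≤
        (((j : ℝ) + 1) / ((n : ℝ) + 1)) ^ (θ : ℝ) :=
  stmt9_general P θ n Z hZm hind hpois j hj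
end
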